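/- arXiv:2008.08210 — 4 statements merged into one kernel-verified Lean document; each statement's English description precedes it below -/
import Mathlib

section
/- Let (μ₁, μ₂) be an Angelesco system. For every multi-index n = (n₁, n₂) with n₁, n₂ ≥ 1, let A_n^(1), A_n^(2) be normalized type I polynomials with deg A_n^(k) = n_k − 1 whose zeros all lie in Δ_k (k = 1, 2), and assume the nearest-neighbor recurrence hypothesis holds with coefficients a_{n,1}, a_{n,2} > 0. Let λ_{n,1} denote the coefficient of x^{n₁−1} in A_n^(1) and λ_{n,2} the coefficient of x^{n₂−1} in A_n^(2). Then for every such n one has sgn λ_{n,1} = (−1)^{n₂} and λ_{n,2} > 0. -/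
/-!
For `deg r < N = n₁ + n₂`, orthogonality and normalization say exactly that
`L r := ∫ r A₁ dμ₁ + ∫ r A₂ dμ₂` is the coefficient of `x ^ (N - 1)` in `r`. As the zeros of `A₂`
lie to the right of `Δ₁` and those of `A₁` to the left of `Δ₂`, `A₂` has the sign of
`(-1) ^ (n₂ - 1) λ₂` on `Δ₁` and `A₁` the sign of `λ₁` on `Δ₂`. Testing `L` on `r = A₁ A₂`, where
`L r = 0`, shows that these two signs are opposite; testing it on `r = A₁ A₂ (x - β₁)`, where
`L r = λ₁ λ₂`, then gives `λ₂ > 0`, and hence `sgn λ₁ = (-1) ^ n₂`.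
-/

open MeasureTheory Polynomial

/-- The (topological) support of a Borel measure on `ℝ`. -/
def msupport (μ : Measure ℝ) : Set ℝ := {x | ∀ U ∈ nhds x, μ U ≠ 0}

open Set

namespace Polynomial

variable {p : ℝ[X]} {x : ℝ}

theorem Splits.leadingCoeff_mul_eval_pos (hsplit : p.Splits) (hp : p ≠ 0)
    (hx : ∀ r ∈ p.roots, r < x) : 0 < p.leadingCoeff * p.eval x := by
  rw [hsplit.eval_eq_prod_roots, ← mul_assoc]
  refine mul_pos (mul_self_pos.mpr (leadingCoeff_ne_zero.mpr hp)) (Multiset.prod_pos ?_)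
  intro y hy
  obtain ⟨r, hr, rfl⟩ := Multiset.mem_map.mp hy
  exact sub_pos.mpr (hx r hr)

theorem Splits.neg_one_pow_mul_leadingCoeff_mul_eval_pos (hsplit : p.Splits) (hp : p ≠ 0)
    (hx : ∀ r ∈ p.roots, x < r) : 0 < (-1) ^ p.natDegree * p.leadingCoeff * p.eval x := by
  have hprod : (p.roots.map (x - ·)).prod = (-1) ^ p.natDegree * (p.roots.map (· - x)).prod := by
    rw [hsplit.natDegree_eq_card_roots, ← Multiset.card_map (· - x), ← Multiset.prod_map_neg,
      Multiset.map_map]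
    exact congrArg _ (Multiset.map_congr rfl fun r _ => (neg_sub r x).symm)
  have hsq : ((-1 : ℝ) ^ p.natDegree) ^ 2 = 1 := by
    rw [← pow_mul, mul_comm, pow_mul, neg_one_sq, one_pow]
  rw [hsplit.eval_eq_prod_roots, hprod,
    show ∀ a b c : ℝ, a * b * (b * (a * c)) = a ^ 2 * (b * b) * c by intros; ring, hsq, one_mul]
  refine mul_pos (mul_self_pos.mpr (leadingCoeff_ne_zero.mpr hp)) (Multiset.prod_pos ?_)
  intro y hy
  obtain ⟨r, hr, rfl⟩ := Multiset.mem_map.mp hy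
  exact sub_pos.mpr (hx r hr)

end Polynomial

theorem msupport_subset_compl (μ : Measure ℝ) {U : Set ℝ} (hU : IsOpen U) (hμU : μ U = 0) :
    msupport μ ⊆ Uᶜ :=
  fun _ hx hxU => hx U (hU.mem_nhds hxU) hμU

section IntegralEval

variable {μ : Measure ℝ} [IsFiniteMeasureOnCompacts μ] {a b : ℝ}

theorem Polynomial.integrable_eval (hμ : μ (Icc a b)ᶜ = 0) (P : ℝ[X]) :
    Integrable (fun x => P.eval x) μ := by
  rw [← Measure.restrict_eq_self_of_ae_mem (mem_ae_iff.mpr hμ)]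
  exact P.continuous.integrableOn_Icc

theorem Polynomial.integral_eval_pos (hμ : μ (Icc a b)ᶜ = 0) (hinf : (msupport μ).Infinite)
    {P : ℝ[X]} (hP : P ≠ 0) (hnonneg : ∀ x ∈ Icc a b, 0 ≤ P.eval x) :
    0 < ∫ x, P.eval x ∂μ := by
  have hae : 0 ≤ᵐ[μ] fun x => P.eval x := by
    filter_upwards [mem_ae_iff.mpr hμ] with x hx using hnonneg x hx
  rw [integral_pos_iff_support_of_nonneg_ae hae (P.integrable_eval hμ), pos_iff_ne_zero]
  intro hzero
  have hroots : msupport μ ⊆ {x | P.IsRoot x} := fun x hx =>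
    Function.notMem_support.mp (msupport_subset_compl μ P.continuous.isOpen_support hzero hx)
  exact hinf ((P.finite_setOfPred_isRoot hP).subset hroots)

theorem Polynomial.mul_integral_eval_pos (hμ : μ (Icc a b)ᶜ = 0) (hinf : (msupport μ).Infinite)
    {P : ℝ[X]} {c : ℝ} (hP : P ≠ 0) (hc : c ≠ 0) (hnonneg : ∀ x ∈ Icc a b, 0 ≤ c * P.eval x) :
    0 < c * ∫ x, P.eval x ∂μ := by
  rw [← integral_const_mul]
  simpa using integral_eval_pos hμ hinf (mul_ne_zero (C_ne_zero.mpr hc) hP) (by simpa using hnonneg)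

theorem Polynomial.integral_eval_mul_eq_sum (hμ : μ (Icc a b)ᶜ = 0) (p : ℝ[X]) {r : ℝ[X]} {N : ℕ}
    (hr : r.natDegree < N) :
    ∫ x, (r * p).eval x ∂μ = ∑ m ∈ Finset.range N, r.coeff m * ∫ x, x ^ m * p.eval x ∂μ := by
  have hexpand : ∀ x, (r * p).eval x = ∑ m ∈ Finset.range N, r.coeff m * (x ^ m * p.eval x) := by
    intro x
    simp_rw [eval_mul, eval_eq_sum_range' hr, Finset.sum_mul, mul_assoc]
  simp_rw [hexpand, ← integral_const_mul]
  refine integral_finsetSum _ fun m _ => Integrable.const_mul ?_ _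
  have h := (X ^ m * p).integrable_eval hμ
  simp only [eval_mul, eval_pow, eval_X] at h
  exact h

end IntegralEval

/-- `(p, q)` is the normalized type I pair `(A_n^(1), A_n^(2))` of total index `N = n₁ + n₂`. -/
structure IsTypeIPair (μ₁ μ₂ : Measure ℝ) (N : ℕ) (p q : ℝ[X]) : Prop where
  orthogonal : ∀ m, m + 2 ≤ N → ∫ x, x ^ m * p.eval x ∂μ₁ + ∫ x, x ^ m * q.eval x ∂μ₂ = 0
  normalized : ∫ x, x ^ (N - 1) * p.eval x ∂μ₁ + ∫ x, x ^ (N - 1) * q.eval x ∂μ₂ = 1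

namespace IsTypeIPair

variable {μ₁ μ₂ : Measure ℝ} [IsFiniteMeasureOnCompacts μ₁] [IsFiniteMeasureOnCompacts μ₂]
  {a₁ b₁ a₂ b₂ : ℝ} {N : ℕ} {p q : ℝ[X]}

theorem integral_add_integral_eq_coeff (hpair : IsTypeIPair μ₁ μ₂ N p q)
    (hμ₁ : μ₁ (Icc a₁ b₁)ᶜ = 0) (hμ₂ : μ₂ (Icc a₂ b₂)ᶜ = 0) {r : ℝ[X]} (hr : r.natDegree < N) :
    ∫ x, (r * p).eval x ∂μ₁ + ∫ x, (r * q).eval x ∂μ₂ = r.coeff (N - 1) := by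
  rw [integral_eval_mul_eq_sum hμ₁ p hr, integral_eval_mul_eq_sum hμ₂ q hr,
    ← Finset.sum_add_distrib, Finset.sum_eq_single (N - 1)]
  · rw [← mul_add, hpair.normalized, mul_one]
  · intro m hm hne
    rw [← mul_add, hpair.orthogonal m (by rw [Finset.mem_range] at hm; omega), mul_zero]
  · intro h
    exact absurd (Finset.mem_range.mpr (by omega)) h

theorem mul_coeff_pos (hpair : IsTypeIPair μ₁ μ₂ N p q)
    (hμ₁ : μ₁ (Icc a₁ b₁)ᶜ = 0) (hμ₂ : μ₂ (Icc a₂ b₂)ᶜ = 0) (hinf₁ : (msupport μ₁).Infinite)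
    {r : ℝ[X]} (hr : r.natDegree < N) {s : ℝ} (hs : s ≠ 0) (hrp : r * p ≠ 0)
    (h₁ : ∀ x ∈ Icc a₁ b₁, 0 ≤ s * (r * p).eval x)
    (h₂ : ∀ x ∈ Icc a₂ b₂, 0 ≤ s * (r * q).eval x) :
    0 < s * r.coeff (N - 1) := by
  rw [← hpair.integral_add_integral_eq_coeff hμ₁ hμ₂ hr, mul_add]
  refine add_pos_of_pos_of_nonneg (mul_integral_eval_pos hμ₁ hinf₁ hrp hs h₁) ?_
  rw [← integral_const_mul]
  exact integral_nonneg_of_ae (by filter_upwards [mem_ae_iff.mpr hμ₂] with x hx using h₂ x hx)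

theorem mul_neg_of_eval_signs
    (hpair : IsTypeIPair μ₁ μ₂ (p.natDegree + q.natDegree + 2) p q)
    (hμ₁ : μ₁ (Icc a₁ b₁)ᶜ = 0) (hμ₂ : μ₂ (Icc a₂ b₂)ᶜ = 0) (hinf₁ : (msupport μ₁).Infinite)
    (hp : p ≠ 0) (hq : q ≠ 0) {u v : ℝ} (hu : u ≠ 0) (hv : v ≠ 0)
    (hq_sign : ∀ x ∈ Icc a₁ b₁, 0 < u * q.eval x) (hp_sign : ∀ x ∈ Icc a₂ b₂, 0 < v * p.eval x) :
    u * v < 0 := by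
  by_contra! hsame
  -- if `u v ≥ 0`, the weight `u v²` makes both halves of `L (p q) = 0` nonnegative, one positive
  have hpos := hpair.mul_coeff_pos hμ₁ hμ₂ hinf₁ (r := p * q) (s := u * v ^ 2)
    (by rw [natDegree_mul hp hq]; omega) (mul_ne_zero hu (pow_ne_zero 2 hv))
    (mul_ne_zero (mul_ne_zero hp hq) hp)
    (fun x hx => (mul_nonneg (hq_sign x hx).le (sq_nonneg (v * p.eval x))).trans_eq
      (by simp only [eval_mul]; ring))
    (fun x hx => (mul_nonneg (mul_nonneg hsame (hp_sign x hx).le) (sq_nonneg (q.eval x))).trans_eq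
      (by simp only [eval_mul]; ring))
  rw [coeff_eq_zero_of_natDegree_lt (by rw [natDegree_mul hp hq]; omega), mul_zero] at hpos
  exact hpos.false

theorem mul_leadingCoeff_mul_pos_of_eval_signs
    (hpair : IsTypeIPair μ₁ μ₂ (p.natDegree + q.natDegree + 2) p q)
    (hμ₁ : μ₁ (Icc a₁ b₁)ᶜ = 0) (hμ₂ : μ₂ (Icc a₂ b₂)ᶜ = 0) (hinf₁ : (msupport μ₁).Infinite)
    (hsep : b₁ < a₂) (hp : p ≠ 0) (hq : q ≠ 0) {u v : ℝ} (huv : u * v < 0)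
    (hq_sign : ∀ x ∈ Icc a₁ b₁, 0 < u * q.eval x) (hp_sign : ∀ x ∈ Icc a₂ b₂, 0 < v * p.eval x) :
    0 < v * (p.leadingCoeff * q.leadingCoeff) := by
  set r := p * q * (X - C b₁)
  have hr_deg : r.natDegree = p.natDegree + q.natDegree + 1 := by
    rw [natDegree_mul (mul_ne_zero hp hq) (X_sub_C_ne_zero b₁), natDegree_mul hp hq,
      natDegree_X_sub_C]
  have hpos := hpair.mul_coeff_pos hμ₁ hμ₂ hinf₁ (r := r) (s := -(u * v) * v) (by omega)
    (mul_ne_zero (neg_ne_zero.mpr huv.ne) (mul_ne_zero_iff.mp huv.ne).2)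
    (mul_ne_zero (mul_ne_zero (mul_ne_zero hp hq) (X_sub_C_ne_zero b₁)) hp)
    (fun x hx => (mul_nonneg (mul_nonneg (hq_sign x hx).le (sub_nonneg.mpr hx.2))
      (sq_nonneg (v * p.eval x))).trans_eq
      (by simp only [r, eval_mul, eval_sub, eval_X, eval_C]; ring))
    (fun x hx => (mul_nonneg (mul_nonneg (mul_nonneg (neg_nonneg.mpr huv.le) (hp_sign x hx).le)
      (sub_nonneg.mpr (hsep.le.trans hx.1))) (sq_nonneg (q.eval x))).trans_eq
      (by simp only [r, eval_mul, eval_sub, eval_X, eval_C]; ring))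
  rw [show p.natDegree + q.natDegree + 2 - 1 = r.natDegree by omega, coeff_natDegree,
    leadingCoeff_mul, leadingCoeff_mul, leadingCoeff_X_sub_C, mul_one, mul_assoc] at hpos
  exact pos_of_mul_pos_right hpos (neg_nonneg.mpr huv.le)

theorem leadingCoeff_signs
    (hpair : IsTypeIPair μ₁ μ₂ (p.natDegree + q.natDegree + 2) p q)
    (hμ₁ : μ₁ (Icc a₁ b₁)ᶜ = 0) (hμ₂ : μ₂ (Icc a₂ b₂)ᶜ = 0) (hinf₁ : (msupport μ₁).Infinite)
    (hsep : b₁ < a₂) (hp : p ≠ 0) (hq : q ≠ 0) (hp_split : p.Splits) (hq_split : q.Splits)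
    (hp_roots : ∀ r ∈ p.roots, r ≤ b₁) (hq_roots : ∀ r ∈ q.roots, a₂ ≤ r) :
    0 < (-1) ^ (q.natDegree + 1) * p.leadingCoeff ∧ 0 < q.leadingCoeff := by
  set σ : ℝ := (-1) ^ q.natDegree
  have hl₁ : p.leadingCoeff ≠ 0 := leadingCoeff_ne_zero.mpr hp
  have hσl₂ : σ * q.leadingCoeff ≠ 0 :=
    mul_ne_zero (pow_ne_zero _ (by norm_num)) (leadingCoeff_ne_zero.mpr hq)
  have hq_sign : ∀ x ∈ Icc a₁ b₁, 0 < σ * q.leadingCoeff * q.eval x := fun x hx =>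
    hq_split.neg_one_pow_mul_leadingCoeff_mul_eval_pos hq fun r hr =>
      (hx.2.trans_lt hsep).trans_le (hq_roots r hr)
  have hp_sign : ∀ x ∈ Icc a₂ b₂, 0 < p.leadingCoeff * p.eval x := fun x hx =>
    hp_split.leadingCoeff_mul_eval_pos hp fun r hr => (hp_roots r hr).trans_lt (hsep.trans_le hx.1)
  have hopp := hpair.mul_neg_of_eval_signs hμ₁ hμ₂ hinf₁ hp hq hσl₂ hl₁ hq_sign hp_sign
  have hl₂ : 0 < q.leadingCoeff := by
    have h := hpair.mul_leadingCoeff_mul_pos_of_eval_signs hμ₁ hμ₂ hinf₁ hsep hp hq hopp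
      hq_sign hp_sign
    rw [← mul_assoc] at h
    exact pos_of_mul_pos_right h (mul_self_nonneg _)
  refine ⟨?_, hl₂⟩
  rw [pow_succ]
  nlinarith

end IsTypeIPair

theorem stmt1_general
    (μ₁ μ₂ : Measure ℝ) [IsFiniteMeasure μ₁] [IsFiniteMeasure μ₂]
    (α₁ β₁ α₂ β₂ : ℝ)
    (hsupp1 : μ₁ (Set.Icc α₁ β₁)ᶜ = 0) (hsupp2 : μ₂ (Set.Icc α₂ β₂)ᶜ = 0)
    (hinf1 : (msupport μ₁).Infinite)
    (hsep : β₁ < α₂)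
    (A1 A2 : ℕ → ℕ → Polynomial ℝ)
    (hdeg1 : ∀ n₁ n₂, 1 ≤ n₁ → A1 n₁ n₂ ≠ 0 ∧ (A1 n₁ n₂).natDegree = n₁ - 1)
    (hdeg2 : ∀ n₁ n₂, 1 ≤ n₂ → A2 n₁ n₂ ≠ 0 ∧ (A2 n₁ n₂).natDegree = n₂ - 1)
    (horth : ∀ n₁ n₂, 1 ≤ n₁ + n₂ → ∀ m, m + 2 ≤ n₁ + n₂ →
      (∫ x, x ^ m * (A1 n₁ n₂).eval x ∂μ₁) + (∫ x, x ^ m * (A2 n₁ n₂).eval x ∂μ₂) = 0)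
    (hnorm : ∀ n₁ n₂, 1 ≤ n₁ + n₂ →
      (∫ x, x ^ (n₁ + n₂ - 1) * (A1 n₁ n₂).eval x ∂μ₁)
        + (∫ x, x ^ (n₁ + n₂ - 1) * (A2 n₁ n₂).eval x ∂μ₂) = 1)
    (hroots1 : ∀ n₁ n₂, 1 ≤ n₁ → 1 ≤ n₂ →
      (A1 n₁ n₂).roots.card = n₁ - 1 ∧ ∀ x ∈ (A1 n₁ n₂).roots, x ∈ Set.Icc α₁ β₁)
    (hroots2 : ∀ n₁ n₂, 1 ≤ n₁ → 1 ≤ n₂ →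
      (A2 n₁ n₂).roots.card = n₂ - 1 ∧ ∀ x ∈ (A2 n₁ n₂).roots, x ∈ Set.Icc α₂ β₂) :
    ∀ n₁ n₂, 1 ≤ n₁ → 1 ≤ n₂ →
      0 < (-1 : ℝ) ^ n₂ * (A1 n₁ n₂).coeff (n₁ - 1)
        ∧ 0 < (A2 n₁ n₂).coeff (n₂ - 1) := by
  intro n₁ n₂ hn₁ hn₂
  obtain ⟨hp, hp_deg⟩ := hdeg1 n₁ n₂ hn₁
  obtain ⟨hq, hq_deg⟩ := hdeg2 n₁ n₂ hn₂
  obtain ⟨hp_card, hp_roots⟩ := hroots1 n₁ n₂ hn₁ hn₂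
  obtain ⟨hq_card, hq_roots⟩ := hroots2 n₁ n₂ hn₁ hn₂
  have hpair : IsTypeIPair μ₁ μ₂ ((A1 n₁ n₂).natDegree + (A2 n₁ n₂).natDegree + 2)
      (A1 n₁ n₂) (A2 n₁ n₂) := by
    rw [hp_deg, hq_deg, show n₁ - 1 + (n₂ - 1) + 2 = n₁ + n₂ by omega]
    exact ⟨horth n₁ n₂ (by omega), hnorm n₁ n₂ (by omega)⟩
  obtain ⟨hlc₁, hlc₂⟩ := hpair.leadingCoeff_signs hsupp1 hsupp2 hinf1 hsep hp hq
    (splits_iff_card_roots.mpr (hp_deg ▸ hp_card)) (splits_iff_card_roots.mpr (hq_deg ▸ hq_card))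
    (fun r hr => (hp_roots r hr).2) (fun r hr => (hq_roots r hr).1)
  rw [hq_deg, Nat.sub_add_cancel hn₂] at hlc₁
  rw [← hp_deg, ← hq_deg]
  exact ⟨hlc₁, hlc₂⟩

/-- For an Angelesco system, the leading coefficients `λ_{n,1}` and `λ_{n,2}` of the
normalized type I polynomials satisfy `sgn λ_{n,1} = (−1)^{n₂}` and `λ_{n,2} > 0`. -/
theorem stmt1
    (μ₁ μ₂ : Measure ℝ) [IsFiniteMeasure μ₁] [IsFiniteMeasure μ₂]
    (α₁ β₁ α₂ β₂ : ℝ)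
    (hsupp1 : μ₁ (Set.Icc α₁ β₁)ᶜ = 0) (hsupp2 : μ₂ (Set.Icc α₂ β₂)ᶜ = 0)
    (hinf1 : (msupport μ₁).Infinite) (hinf2 : (msupport μ₂).Infinite)
    (hα₁ : α₁ ∈ msupport μ₁) (hβ₁ : β₁ ∈ msupport μ₁)
    (hα₂ : α₂ ∈ msupport μ₂) (hβ₂ : β₂ ∈ msupport μ₂)
    (hsep : β₁ < α₂)
    (A1 A2 : ℕ → ℕ → Polynomial ℝ)
    (hA1zero : ∀ m, A1 0 m = 0) (hA2zero : ∀ m, A2 m 0 = 0)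
    (hdeg1 : ∀ n₁ n₂, 1 ≤ n₁ → A1 n₁ n₂ ≠ 0 ∧ (A1 n₁ n₂).natDegree = n₁ - 1)
    (hdeg2 : ∀ n₁ n₂, 1 ≤ n₂ → A2 n₁ n₂ ≠ 0 ∧ (A2 n₁ n₂).natDegree = n₂ - 1)
    (horth : ∀ n₁ n₂, 1 ≤ n₁ + n₂ → ∀ m, m + 2 ≤ n₁ + n₂ →
      (∫ x, x ^ m * (A1 n₁ n₂).eval x ∂μ₁) + (∫ x, x ^ m * (A2 n₁ n₂).eval x ∂μ₂) = 0)
    (hnorm : ∀ n₁ n₂, 1 ≤ n₁ + n₂ →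
      (∫ x, x ^ (n₁ + n₂ - 1) * (A1 n₁ n₂).eval x ∂μ₁)
        + (∫ x, x ^ (n₁ + n₂ - 1) * (A2 n₁ n₂).eval x ∂μ₂) = 1)
    (hroots1 : ∀ n₁ n₂, 1 ≤ n₁ → 1 ≤ n₂ →
      (A1 n₁ n₂).roots.card = n₁ - 1 ∧ ∀ x ∈ (A1 n₁ n₂).roots, x ∈ Set.Icc α₁ β₁)
    (hroots2 : ∀ n₁ n₂, 1 ≤ n₁ → 1 ≤ n₂ →
      (A2 n₁ n₂).roots.card = n₂ - 1 ∧ ∀ x ∈ (A2 n₁ n₂).roots, x ∈ Set.Icc α₂ β₂)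
    (c1 c2 a1 a2 : ℕ → ℕ → ℝ)
    (hapos : ∀ n₁ n₂, 1 ≤ n₁ → 1 ≤ n₂ → 0 < a1 n₁ n₂ ∧ 0 < a2 n₁ n₂)
    (hrec11 : ∀ n₁ n₂, 1 ≤ n₁ → 1 ≤ n₂ →
      X * A1 n₁ n₂ = A1 (n₁ - 1) n₂ + C (c1 n₁ n₂) * A1 n₁ n₂
        + C (a1 n₁ n₂) * A1 (n₁ + 1) n₂ + C (a2 n₁ n₂) * A1 n₁ (n₂ + 1))
    (hrec12 : ∀ n₁ n₂, 1 ≤ n₁ → 1 ≤ n₂ →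
      X * A1 n₁ n₂ = A1 n₁ (n₂ - 1) + C (c2 n₁ n₂) * A1 n₁ n₂
        + C (a1 n₁ n₂) * A1 (n₁ + 1) n₂ + C (a2 n₁ n₂) * A1 n₁ (n₂ + 1))
    (hrec21 : ∀ n₁ n₂, 1 ≤ n₁ → 1 ≤ n₂ →
      X * A2 n₁ n₂ = A2 (n₁ - 1) n₂ + C (c1 n₁ n₂) * A2 n₁ n₂
        + C (a1 n₁ n₂) * A2 (n₁ + 1) n₂ + C (a2 n₁ n₂) * A2 n₁ (n₂ + 1))
    (hrec22 : ∀ n₁ n₂, 1 ≤ n₁ → 1 ≤ n₂ →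
      X * A2 n₁ n₂ = A2 n₁ (n₂ - 1) + C (c2 n₁ n₂) * A2 n₁ n₂
        + C (a1 n₁ n₂) * A2 (n₁ + 1) n₂ + C (a2 n₁ n₂) * A2 n₁ (n₂ + 1)) :
    ∀ n₁ n₂, 1 ≤ n₁ → 1 ≤ n₂ →
      0 < (-1 : ℝ) ^ n₂ * (A1 n₁ n₂).coeff (n₁ - 1)
        ∧ 0 < (A2 n₁ n₂).coeff (n₂ - 1) :=
  stmt1_general μ₁ μ₂ α₁ β₁ α₂ β₂ hsupp1 hsupp2 hinf1 hsep A1 A2 hdeg1 hdeg2 horth hnorm hroots1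
    hroots2
end

section
/- Let (μ₁, μ₂) be an Angelesco system with Δ₁ = [α₁, β₁] < Δ₂ = [α₂, β₂], let n₁, n₂ ≥ 1, let A₁ be a real polynomial of degree n₁ − 1 with all zeros in Δ₁ and leading coefficient of sign (−1)^{n₂}, let A₂ be a real polynomial of degree n₂ − 1 with all zeros in Δ₂ and positive leading coefficient, and assume the orthogonality conditions ∫ x^m (A₁(x) dμ₁(x) + A₂(x) dμ₂(x)) = 0 hold for all m = 0, …, n₁+n₂−2. Then the function of the second kind L(z) = ∫ (A₁(x) dμ₁(x) + A₂(x) dμ₂(x))/(z − x) has no zeros in ℂ ∖ (Δ₁ ∪ Δ₂). -/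
open MeasureTheory Polynomial

/-!
Suppose `L z = 0` and write `ν = A₁ μ₁ + A₂ μ₂`. For a real polynomial `Q` of degree
`< n₁ + n₂`, dividing `Q` by `X - z` gives `Q(x) = Q(z) + (x - z) S(x)` with `deg S ≤ n₁ + n₂ - 2`,
so orthogonality and `L z = 0` give `∫ Q(x) / (z - x) dν = 0`; taking real or imaginary parts,
`∫ Q k dν = 0` for the real kernel `k(x) = Re (z - x)⁻¹ = (Re z - x) / |z - x|²` or
`k(x) = Im (z - x)⁻¹ = -Im z / |z - x|²`. In each position of `z` there is an `h` of degree `≤ 1`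
with `h k < 0` on `Δ₁` and `h k > 0` on `Δ₂`. For `Q = ε A₁ A₂ h` with `ε = (-1)^n₂`, the sign
conditions on `A₁`, `A₂` make `Q A₁ k = A₁² (ε A₂) (h k)` positive on `Δ₁` off the zeros of `A₁`,
and `Q A₂ k = A₂² (ε A₁) (h k)` nonnegative on `Δ₂`. Since `supp μ₁` is infinite,
`∫ Q k dν > 0`, a contradiction.
-/

open Set

lemma msupport_subset_of_measure_compl_eq_zero {μ : Measure ℝ} {S : Set ℝ} (hS : IsClosed S)
    (h : μ Sᶜ = 0) : msupport μ ⊆ S := fun x hx => by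
  by_contra hxS
  exact hx Sᶜ (hS.isOpen_compl.mem_nhds hxS) h

lemma integrable_of_continuousOn_of_measure_compl_eq_zero {E : Type*} [NormedAddCommGroup E]
    {μ : Measure ℝ} [IsFiniteMeasure μ] {K : Set ℝ} (hK : IsCompact K) (hμK : μ Kᶜ = 0)
    {f : ℝ → E} (hf : ContinuousOn f K) : Integrable f μ := by
  rw [← Measure.restrict_eq_self_of_ae_mem (ae_iff.2 hμK)]
  exact hf.integrableOn_compact hK

lemma integral_pos_of_finite_zeros {μ : Measure ℝ} {K : Set ℝ} (hμK : μ Kᶜ = 0)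
    (hμ : (msupport μ).Infinite) {f : ℝ → ℝ} (hf : Integrable f μ) (hpos : ∀ x ∈ K, 0 ≤ f x)
    (hzero : {x ∈ K | f x = 0}.Finite) : 0 < ∫ x, f x ∂μ := by
  have hK : ∀ᵐ x ∂μ, x ∈ K := ae_iff.2 hμK
  have hnonneg : 0 ≤ᵐ[μ] f := hK.mono hpos
  refine (integral_nonneg_of_ae hnonneg).lt_of_ne fun h0 => hμ ?_
  have hf0 : ∀ᵐ x ∂μ, f x = 0 := (integral_eq_zero_iff_of_nonneg_ae hnonneg hf).1 h0.symm
  refine hzero.subset (msupport_subset_of_measure_compl_eq_zero hzero.isClosed ?_)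
  exact ae_iff.1 (hK.and hf0)

lemma Polynomial.Splits.mul_eval_pos_of_roots_lt {A : ℝ[X]} (hA : A.Splits) {x c : ℝ}
    (hx : ∀ r ∈ A.roots, r < x) (hc : 0 < c * A.leadingCoeff) : 0 < c * A.eval x := by
  have hprod : 0 < (A.roots.map (x - ·)).prod :=
    Multiset.prod_pos fun a ha => by
      obtain ⟨r, hr, rfl⟩ := Multiset.mem_map.1 ha
      exact sub_pos.2 (hx r hr)
  rw [hA.eval_eq_prod_roots, ← mul_assoc]
  exact mul_pos hc hprod

lemma Polynomial.Splits.mul_neg_one_pow_mul_eval_pos_of_lt_roots {A : ℝ[X]} (hA : A.Splits)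
    {x c : ℝ} (hx : ∀ r ∈ A.roots, x < r) (hc : 0 < c * A.leadingCoeff) :
    0 < c * (-1) ^ A.natDegree * A.eval x := by
  have hprod : 0 < (A.roots.map (· - x)).prod :=
    Multiset.prod_pos fun a ha => by
      obtain ⟨r, hr, rfl⟩ := Multiset.mem_map.1 ha
      exact sub_pos.2 (hx r hr)
  have hflip : (A.roots.map (x - ·)).prod = (-1) ^ A.natDegree * (A.roots.map (· - x)).prod := by
    rw [hA.natDegree_eq_card_roots, ← Multiset.card_map (· - x), ← Multiset.prod_map_neg,
      Multiset.map_map]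
    simp only [Function.comp_def, neg_sub]
  have hsq : ((-1 : ℝ) ^ A.natDegree) ^ 2 = 1 := by rw [← pow_mul, pow_mul']; simp
  rw [hA.eval_eq_prod_roots, hflip]
  calc 0 < c * A.leadingCoeff * (A.roots.map (· - x)).prod := mul_pos hc hprod
    _ = _ := by linear_combination (-c * A.leadingCoeff * (A.roots.map (· - x)).prod) * hsq

lemma Polynomial.natDegree_C_mul_mul_mul_le {R : Type*} [Semiring R] (ε : R) (A₁ A₂ h : R[X]) :
    (C ε * A₁ * A₂ * h).natDegree ≤ A₁.natDegree + A₂.natDegree + h.natDegree :=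
by
  have h₁ := natDegree_mul_le (p := C ε * A₁ * A₂) (q := h)
  have h₂ := natDegree_mul_le (p := C ε * A₁) (q := A₂)
  have h₃ := natDegree_C_mul_le ε A₁
  omega

section Moments

variable {μ : Measure ℝ} [IsFiniteMeasure μ] {K : Set ℝ}

lemma integral_eval_mul_eq_sum_moments (hK : IsCompact K) (hμK : μ Kᶜ = 0) (S : ℂ[X])
    (A : ℝ[X]) :
    ∫ x, S.eval (x : ℂ) * ((A.eval x : ℝ) : ℂ) ∂μ
      = ∑ i ∈ Finset.range (S.natDegree + 1), S.coeff i * ((∫ x, x ^ i * A.eval x ∂μ : ℝ) : ℂ) := by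
  simp_rw [eval_eq_sum_range (p := S), Finset.sum_mul]
  rw [integral_finsetSum]
  · refine Finset.sum_congr rfl fun i _ => ?_
    rw [← integral_complex_ofReal, ← integral_const_mul]
    congr 1 with x
    push_cast
    ring
  · exact fun i _ => integrable_of_continuousOn_of_measure_compl_eq_zero hK hμK
      (by fun_prop : Continuous _).continuousOn

lemma integrable_div_sub (hK : IsCompact K) (hμK : μ Kᶜ = 0) {z : ℂ}
    (hz : ∀ x ∈ K, (x : ℂ) ≠ z) {f : ℝ → ℂ} (hf : Continuous f) :
    Integrable (fun x : ℝ => f x / (z - x)) μ :=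
  integrable_of_continuousOn_of_measure_compl_eq_zero hK hμK
    (hf.continuousOn.div (by fun_prop) fun x hx => sub_ne_zero.2 (hz x hx).symm)

lemma integral_mul_inv_sub_eq (hK : IsCompact K) (hμK : μ Kᶜ = 0) {z : ℂ}
    (hz : ∀ x ∈ K, (x : ℂ) ≠ z) (Q A : ℝ[X]) :
    ∫ x, ((Q.eval x * A.eval x : ℝ) : ℂ) * (z - x)⁻¹ ∂μ
      = (Q.map Complex.ofRealHom).eval z * (∫ x, ((A.eval x : ℝ) : ℂ) / (z - x) ∂μ)
        - ∫ x, ((Q.map Complex.ofRealHom) /ₘ (X - C z)).eval (x : ℂ) * ((A.eval x : ℝ) : ℂ) ∂μ := by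
  set P := Q.map Complex.ofRealHom
  set S := P /ₘ (X - C z)
  have hdiv : ∀ w : ℂ, P.eval w = P.eval z + (w - z) * S.eval w := fun w => by
    conv_lhs => rw [← modByMonic_add_div P (X - C z)]
    simp [modByMonic_X_sub_C_eq_C_eval, S]
  have hPx : ∀ x : ℝ, P.eval (x : ℂ) = ((Q.eval x : ℝ) : ℂ) := fun x => by
    simp only [P, eval_map]
    exact eval₂_at_apply Complex.ofRealHom x
  have hsub : ∀ x ∈ K, z - (x : ℂ) ≠ 0 := fun x hx => sub_ne_zero.2 (hz x hx).symm
  have hint₁ : Integrable (fun x : ℝ => ((A.eval x : ℝ) : ℂ) / (z - x)) μ :=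
    integrable_div_sub hK hμK hz (by fun_prop)
  have hint₂ : Integrable (fun x : ℝ => S.eval (x : ℂ) * ((A.eval x : ℝ) : ℂ)) μ :=
    integrable_of_continuousOn_of_measure_compl_eq_zero hK hμK
      (by fun_prop : Continuous _).continuousOn
  rw [← integral_const_mul, ← integral_sub (hint₁.const_mul _) hint₂]
  refine integral_congr_ae ((ae_iff.2 hμK).mono fun x hx => ?_)
  have h := hsub x hx
  dsimp only
  rw [Complex.ofReal_mul, ← hPx, hdiv]
  field_simp
  ring

end Moments

lemma integral_mul_clm_eq {μ : Measure ℝ} (φ : ℂ →L[ℝ] ℝ) {f : ℝ → ℝ} {g : ℝ → ℂ}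
    (hfg : Integrable (fun x => (f x : ℂ) * g x) μ) :
    ∫ x, f x * φ (g x) ∂μ = φ (∫ x, (f x : ℂ) * g x ∂μ) := by
  rw [← φ.integral_comp_comm hfg]
  simp_rw [← Complex.real_smul, map_smul, smul_eq_mul]

section CauchyTransform

variable {μ₁ μ₂ : Measure ℝ} [IsFiniteMeasure μ₁] [IsFiniteMeasure μ₂] {K₁ K₂ : Set ℝ}
  {A₁ A₂ : ℝ[X]} {n : ℕ}

lemma integral_eval_mul_add_eq_zero_of_moments (hK₁ : IsCompact K₁) (hK₂ : IsCompact K₂)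
    (hμ₁ : μ₁ K₁ᶜ = 0) (hμ₂ : μ₂ K₂ᶜ = 0)
    (horth : ∀ m < n, (∫ x, x ^ m * A₁.eval x ∂μ₁) + (∫ x, x ^ m * A₂.eval x ∂μ₂) = 0)
    {S : ℂ[X]} (hS : S.degree < n) :
    (∫ x, S.eval (x : ℂ) * ((A₁.eval x : ℝ) : ℂ) ∂μ₁)
      + ∫ x, S.eval (x : ℂ) * ((A₂.eval x : ℝ) : ℂ) ∂μ₂ = 0 := by
  rw [integral_eval_mul_eq_sum_moments hK₁ hμ₁, integral_eval_mul_eq_sum_moments hK₂ hμ₂,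
    ← Finset.sum_add_distrib]
  refine Finset.sum_eq_zero fun i _ => ?_
  by_cases hi : S.coeff i = 0
  · rw [hi, zero_mul, zero_mul, zero_add]
  have hi : i < n := by exact_mod_cast (le_degree_of_ne_zero hi).trans_lt hS
  rw [← mul_add, ← Complex.ofReal_add, horth i hi, Complex.ofReal_zero, mul_zero]

lemma integral_mul_clm_inv_sub_add_eq_zero (hK₁ : IsCompact K₁) (hK₂ : IsCompact K₂)
    (hμ₁ : μ₁ K₁ᶜ = 0) (hμ₂ : μ₂ K₂ᶜ = 0)
    (horth : ∀ m < n, (∫ x, x ^ m * A₁.eval x ∂μ₁) + (∫ x, x ^ m * A₂.eval x ∂μ₂) = 0)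
    {z : ℂ} (hz₁ : ∀ x ∈ K₁, (x : ℂ) ≠ z) (hz₂ : ∀ x ∈ K₂, (x : ℂ) ≠ z)
    (hLz : (∫ x, ((A₁.eval x : ℝ) : ℂ) / (z - x) ∂μ₁)
      + ∫ x, ((A₂.eval x : ℝ) : ℂ) / (z - x) ∂μ₂ = 0)
    (φ : ℂ →L[ℝ] ℝ) {Q : ℝ[X]} (hQ : Q.degree ≤ n) :
    (∫ x, Q.eval x * A₁.eval x * φ (z - x)⁻¹ ∂μ₁)
      + ∫ x, Q.eval x * A₂.eval x * φ (z - x)⁻¹ ∂μ₂ = 0 := by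
  have hint₁ := integrable_div_sub hK₁ hμ₁ hz₁ (f := fun x => ((Q.eval x * A₁.eval x : ℝ) : ℂ))
    (by fun_prop)
  have hint₂ := integrable_div_sub hK₂ hμ₂ hz₂ (f := fun x => ((Q.eval x * A₂.eval x : ℝ) : ℂ))
    (by fun_prop)
  simp only [div_eq_mul_inv] at hint₁ hint₂
  rw [integral_mul_clm_eq φ hint₁, integral_mul_clm_eq φ hint₂,
    ← map_add, integral_mul_inv_sub_eq hK₁ hμ₁ hz₁, integral_mul_inv_sub_eq hK₂ hμ₂ hz₂]
  have hS := integral_eval_mul_add_eq_zero_of_moments hK₁ hK₂ hμ₁ hμ₂ horth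
    (S := Q.map Complex.ofRealHom /ₘ (X - C z)) ?_
  · rw [← map_zero φ]
    congr 1
    linear_combination (Q.map Complex.ofRealHom).eval z * hLz - hS
  by_cases hQ0 : Q = 0
  · simp [hQ0]
  refine (degree_divByMonic_lt _ _ ((Polynomial.map_ne_zero_iff Complex.ofRealHom.injective).2 hQ0)
    (by rw [degree_X_sub_C]; exact zero_lt_one)).trans_le ?_
  rwa [degree_map]

end CauchyTransform

lemma exists_clm_poly_sign_change {α₁ β₁ α₂ β₂ : ℝ} (hsep : β₁ < α₂) {z : ℂ}
    (hz : ∀ x ∈ Icc α₁ β₁ ∪ Icc α₂ β₂, (x : ℂ) ≠ z) :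
    ∃ (φ : ℂ →L[ℝ] ℝ) (h : ℝ[X]), h.degree ≤ 1 ∧
      (∀ x ∈ Icc α₁ β₁, h.eval x * φ (z - x)⁻¹ < 0) ∧
      (∀ x ∈ Icc α₂ β₂, 0 < h.eval x * φ (z - x)⁻¹) := by
  obtain ⟨c, hc₁, hc₂⟩ := exists_between hsep
  suffices ∃ (φ : ℂ →L[ℝ] ℝ) (ℓ : ℝ → ℝ) (h : ℝ[X]),
      (∀ x : ℝ, φ (z - x)⁻¹ = ℓ x / Complex.normSq (z - x)) ∧ h.degree ≤ 1 ∧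
      (∀ x ∈ Icc α₁ β₁, h.eval x * ℓ x < 0) ∧ (∀ x ∈ Icc α₂ β₂, 0 < h.eval x * ℓ x) by
    obtain ⟨φ, ℓ, h, hφ, hh, h₁, h₂⟩ := this
    have hw : ∀ x ∈ Icc α₁ β₁ ∪ Icc α₂ β₂, 0 < Complex.normSq (z - x) :=
      fun x hx => Complex.normSq_pos.2 (sub_ne_zero.2 (hz x hx).symm)
    refine ⟨φ, h, hh, fun x hx => ?_, fun x hx => ?_⟩ <;> rw [hφ, mul_div_assoc']
    · exact div_neg_of_neg_of_pos (h₁ x hx) (hw x (Or.inl hx))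
    · exact div_pos (h₂ x hx) (hw x (Or.inr hx))
  by_cases hs : z.im = 0
  · have hzt : z = (z.re : ℂ) := Complex.ext rfl (by simp [hs])
    have ht₁ : z.re ∉ Icc α₁ β₁ := fun h => hz _ (Or.inl h) hzt.symm
    have ht₂ : z.re ∉ Icc α₂ β₂ := fun h => hz _ (Or.inr h) hzt.symm
    rw [mem_Icc, not_and_or, not_le, not_le] at ht₁ ht₂
    have hre : ∀ x : ℝ, Complex.reCLM (z - x)⁻¹ = (z.re - x) / Complex.normSq (z - x) := by
      simp [Complex.inv_re]
    rcases le_or_gt z.re β₁ with hβ₁ | hβ₁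
    · have hα₁ : z.re < α₁ := ht₁.resolve_right hβ₁.not_gt
      refine ⟨_, _, C c - X, hre, by compute_degree!, fun x hx => ?_, fun x hx => ?_⟩ <;>
        simp only [eval_sub, eval_C, eval_X] <;> nlinarith [hx.1, hx.2]
    rcases lt_or_ge z.re α₂ with hα₂ | hα₂
    · refine ⟨_, _, C (-1), hre, by compute_degree!, fun x hx => ?_, fun x hx => ?_⟩ <;>
        simp only [eval_C] <;> nlinarith [hx.1, hx.2]
    · have hβ₂ : β₂ < z.re := ht₂.resolve_left hα₂.not_gt
      refine ⟨_, _, X - C c, hre, by compute_degree!, fun x hx => ?_, fun x hx => ?_⟩ <;>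
        simp only [eval_sub, eval_C, eval_X] <;> nlinarith [hx.1, hx.2]
  · have him : ∀ x : ℝ, Complex.imCLM (z - x)⁻¹ = -z.im / Complex.normSq (z - x) := by
      simp [Complex.inv_im]
    have hs2 : 0 < z.im * z.im := mul_self_pos.2 hs
    refine ⟨_, _, C z.im * (C c - X), him, by compute_degree!, fun x hx => ?_, fun x hx => ?_⟩ <;>
      simp only [eval_mul, eval_sub, eval_C, eval_X] <;> nlinarith [hx.1, hx.2]

lemma integral_add_integral_pos_of_sign_change {μ₁ μ₂ : Measure ℝ} [IsFiniteMeasure μ₁]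
    {K₁ K₂ : Set ℝ} (hK₁ : IsCompact K₁) (hμ₁ : μ₁ K₁ᶜ = 0) (hμ₂ : μ₂ K₂ᶜ = 0)
    (hinf : (msupport μ₁).Infinite) {A₁ A₂ h : ℝ[X]} {ε : ℝ} {k : ℝ → ℝ} (hA₁ : A₁ ≠ 0)
    (hA₂K₁ : ∀ x ∈ K₁, ε * A₂.eval x < 0) (hA₁K₂ : ∀ x ∈ K₂, 0 ≤ ε * A₁.eval x)
    (hk : ContinuousOn k K₁) (hk₁ : ∀ x ∈ K₁, h.eval x * k x < 0)
    (hk₂ : ∀ x ∈ K₂, 0 ≤ h.eval x * k x) :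
    0 < (∫ x, (C ε * A₁ * A₂ * h).eval x * A₁.eval x * k x ∂μ₁)
      + ∫ x, (C ε * A₁ * A₂ * h).eval x * A₂.eval x * k x ∂μ₂ := by
  have hf₁ : ∀ x, (C ε * A₁ * A₂ * h).eval x * A₁.eval x * k x
      = A₁.eval x ^ 2 * (ε * A₂.eval x * (h.eval x * k x)) := fun x => by
    simp only [eval_mul, eval_C]; ring
  have hf₂ : ∀ x, (C ε * A₁ * A₂ * h).eval x * A₂.eval x * k x
      = A₂.eval x ^ 2 * (ε * A₁.eval x * (h.eval x * k x)) := fun x => by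
    simp only [eval_mul, eval_C]; ring
  have hpos : ∀ x ∈ K₁, 0 < ε * A₂.eval x * (h.eval x * k x) :=
    fun x hx => mul_pos_of_neg_of_neg (hA₂K₁ x hx) (hk₁ x hx)
  simp_rw [hf₁, hf₂]
  refine add_pos_of_pos_of_nonneg (integral_pos_of_finite_zeros hμ₁ hinf ?_ ?_ ?_)
    (integral_nonneg_of_ae ((ae_iff.2 hμ₂).mono fun x hx =>
      mul_nonneg (sq_nonneg _) (mul_nonneg (hA₁K₂ x hx) (hk₂ x hx))))
  · exact integrable_of_continuousOn_of_measure_compl_eq_zero hK₁ hμ₁ (by fun_prop)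
  · exact fun x hx => mul_nonneg (sq_nonneg _) (hpos x hx).le
  · refine (finite_setOfPred_isRoot hA₁).subset fun x ⟨hx, hx0⟩ => ?_
    exact pow_eq_zero_iff two_ne_zero |>.1 ((mul_eq_zero.1 hx0).resolve_right (hpos x hx).ne')

theorem stmt5_general
    (μ₁ μ₂ : Measure ℝ) [IsFiniteMeasure μ₁] [IsFiniteMeasure μ₂]
    (α₁ β₁ α₂ β₂ : ℝ)
    (hsupp1 : μ₁ (Set.Icc α₁ β₁)ᶜ = 0) (hsupp2 : μ₂ (Set.Icc α₂ β₂)ᶜ = 0)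
    (hinf1 : (msupport μ₁).Infinite)
    (hsep : β₁ < α₂)
    (n₁ n₂ : ℕ) (hn₁ : 1 ≤ n₁) (hn₂ : 1 ≤ n₂)
    (A₁ A₂ : Polynomial ℝ)
    (hd₁ : A₁ ≠ 0 ∧ A₁.natDegree = n₁ - 1)
    (hd₂ : A₂ ≠ 0 ∧ A₂.natDegree = n₂ - 1)
    (hroots₁ : A₁.roots.card = n₁ - 1 ∧ ∀ x ∈ A₁.roots, x ∈ Set.Icc α₁ β₁)
    (hroots₂ : A₂.roots.card = n₂ - 1 ∧ ∀ x ∈ A₂.roots, x ∈ Set.Icc α₂ β₂)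
    (hlead₁ : 0 < (-1 : ℝ) ^ n₂ * A₁.leadingCoeff)
    (hlead₂ : 0 < A₂.leadingCoeff)
    (horth : ∀ m, m + 2 ≤ n₁ + n₂ →
      (∫ x, x ^ m * A₁.eval x ∂μ₁) + (∫ x, x ^ m * A₂.eval x ∂μ₂) = 0)
    (L : ℂ → ℂ)
    (hL : L = fun z => (∫ x, ((A₁.eval x : ℝ) : ℂ) / (z - (x : ℂ)) ∂μ₁)
        + ∫ x, ((A₂.eval x : ℝ) : ℂ) / (z - (x : ℂ)) ∂μ₂) :
    ∀ z : ℂ, (∀ x : ℝ, x ∈ Set.Icc α₁ β₁ ∪ Set.Icc α₂ β₂ → (x : ℂ) ≠ z) → L z ≠ 0 := by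
  intro z hz hLz
  subst hL
  have hz₁ : ∀ x ∈ Icc α₁ β₁, (x : ℂ) ≠ z := fun x hx => hz x (Or.inl hx)
  have hz₂ : ∀ x ∈ Icc α₂ β₂, (x : ℂ) ≠ z := fun x hx => hz x (Or.inr hx)
  have hA₁Δ₂ : ∀ x ∈ Icc α₂ β₂, 0 < (-1) ^ n₂ * A₁.eval x := fun x hx =>
    (splits_iff_card_roots.2 (hroots₁.1.trans hd₁.2.symm)).mul_eval_pos_of_roots_lt
      (fun r hr => by linarith [(hroots₁.2 r hr).2, hx.1]) hlead₁
  have hA₂Δ₁ : ∀ x ∈ Icc α₁ β₁, (-1) ^ n₂ * A₂.eval x < 0 := fun x hx => by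
    have h := (splits_iff_card_roots.2 (hroots₂.1.trans hd₂.2.symm))
      |>.mul_neg_one_pow_mul_eval_pos_of_lt_roots (x := x) (c := 1)
        (fun r hr => by linarith [(hroots₂.2 r hr).1, hx.2]) (by rwa [one_mul])
    have hε : (-1 : ℝ) ^ n₂ = -(-1) ^ A₂.natDegree := by
      obtain ⟨m, rfl⟩ : ∃ m, n₂ = m + 1 := ⟨n₂ - 1, by omega⟩
      rw [hd₂.2, Nat.add_sub_cancel, pow_succ, mul_neg_one]
    rw [hε]
    linarith
  obtain ⟨φ, h, hh, hk₁, hk₂⟩ := exists_clm_poly_sign_change hsep hz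
  refine (integral_add_integral_pos_of_sign_change isCompact_Icc hsupp1 hsupp2 hinf1 hd₁.1 hA₂Δ₁
    (fun x hx => (hA₁Δ₂ x hx).le) ?_ hk₁ fun x hx => (hk₂ x hx).le).ne' ?_
  · exact φ.continuous.comp_continuousOn
      ((continuousOn_const.sub Complex.continuous_ofReal.continuousOn).inv₀
        fun x hx => sub_ne_zero.2 (hz₁ x hx).symm)
  refine integral_mul_clm_inv_sub_add_eq_zero isCompact_Icc isCompact_Icc hsupp1 hsupp2
    (n := n₁ + n₂ - 1) (fun m hm => horth m (by omega)) hz₁ hz₂ hLz φ ?_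
  have hR := natDegree_C_mul_mul_mul_le ((-1 : ℝ) ^ n₂) A₁ A₂ h
  rw [hd₁.2, hd₂.2] at hR
  have hh₁ : h.natDegree ≤ 1 := natDegree_le_of_degree_le hh
  exact degree_le_of_natDegree_le (by omega)

/-- For an Angelesco system with type I data `A₁, A₂` satisfying the orthogonality
conditions, the function of the second kind `L` has no zeros in `ℂ ∖ (Δ₁ ∪ Δ₂)`. -/
theorem stmt5
    (μ₁ μ₂ : Measure ℝ) [IsFiniteMeasure μ₁] [IsFiniteMeasure μ₂]
    (α₁ β₁ α₂ β₂ : ℝ)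
    (hsupp1 : μ₁ (Set.Icc α₁ β₁)ᶜ = 0) (hsupp2 : μ₂ (Set.Icc α₂ β₂)ᶜ = 0)
    (hinf1 : (msupport μ₁).Infinite) (hinf2 : (msupport μ₂).Infinite)
    (hα₁ : α₁ ∈ msupport μ₁) (hβ₁ : β₁ ∈ msupport μ₁)
    (hα₂ : α₂ ∈ msupport μ₂) (hβ₂ : β₂ ∈ msupport μ₂)
    (hsep : β₁ < α₂)
    (n₁ n₂ : ℕ) (hn₁ : 1 ≤ n₁) (hn₂ : 1 ≤ n₂)
    (A₁ A₂ : Polynomial ℝ)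
    (hd₁ : A₁ ≠ 0 ∧ A₁.natDegree = n₁ - 1)
    (hd₂ : A₂ ≠ 0 ∧ A₂.natDegree = n₂ - 1)
    (hroots₁ : A₁.roots.card = n₁ - 1 ∧ ∀ x ∈ A₁.roots, x ∈ Set.Icc α₁ β₁)
    (hroots₂ : A₂.roots.card = n₂ - 1 ∧ ∀ x ∈ A₂.roots, x ∈ Set.Icc α₂ β₂)
    (hlead₁ : 0 < (-1 : ℝ) ^ n₂ * A₁.leadingCoeff)
    (hlead₂ : 0 < A₂.leadingCoeff)
    (horth : ∀ m, m + 2 ≤ n₁ + n₂ →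
      (∫ x, x ^ m * A₁.eval x ∂μ₁) + (∫ x, x ^ m * A₂.eval x ∂μ₂) = 0)
    (L : ℂ → ℂ)
    (hL : L = fun z => (∫ x, ((A₁.eval x : ℝ) : ℂ) / (z - (x : ℂ)) ∂μ₁)
        + ∫ x, ((A₂.eval x : ℝ) : ℂ) / (z - (x : ℂ)) ∂μ₂) :
    ∀ z : ℂ, (∀ x : ℝ, x ∈ Set.Icc α₁ β₁ ∪ Set.Icc α₂ β₂ → (x : ℂ) ≠ z) → L z ≠ 0 :=
  stmt5_general μ₁ μ₂ α₁ β₁ α₂ β₂ hsupp1 hsupp2 hinf1 hsep n₁ n₂ hn₁ hn₂ A₁ A₂ hd₁ hd₂ hroots₁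
    hroots₂ hlead₁ hlead₂ horth L hL
end

section
/- Let (μ₁, μ₂) be an Angelesco system with Δ₁ < Δ₂, let ϰ = (ϰ₁, ϰ₂) ∈ ℝ² satisfy ϰ₁ + ϰ₂ = 1, and define L(z) = (ϰ₁/μ₁(ℝ)) μ̂₁(z) + (ϰ₂/μ₂(ℝ)) μ̂₂(z), where μ̂ᵢ(z) = ∫ dμᵢ(x)/(z − x) is the Markov function of μᵢ. Then the set E_ϰ = { E ∈ ℝ ∖ (Δ₁ ∪ Δ₂) : L(E) = 0 } contains at most one point; E_ϰ is empty when ϰ = (1,0) or ϰ = (0,1); and every E ∈ E_ϰ is a simple zero of L, i.e., L′(E) ≠ 0. -/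
/-!
Normalising `μᵢ` to probability measures `νᵢ` turns `L` into `ϰ₁ ν̂₁ + ϰ₂ ν̂₂`. For `E` off
`Δ = [α, β]` and `x ∈ Δ`, `(E - x)⁻¹` lies between `(E - α)⁻¹` and `(E - β)⁻¹` and has a fixed sign,
which bounds `ν̂(E)` and `-ν̂'(E) = ∫ (E - x)⁻² dν` in terms of `ν̂(E)`; in particular `ν̂` has no
zero off `Δ`. At a zero of `L` these bounds fix the signs of `ϰ₁, ϰ₂` by the component of
`ℝ ∖ (Δ₁ ∪ Δ₂)` containing it (`ϰ₁ < 0` left of `Δ₁`, `ϰ₁, ϰ₂ > 0` in the gap, `ϰ₂ < 0` right of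
`Δ₂`), and the sign of `L'` there (negative in the gap, positive outside). So all zeros lie in one
component, and on an interval a continuous function whose derivative at each zero has one fixed sign
vanishes at most once.
-/

open MeasureTheory

open Set Filter Topology Metric

theorem exists_pos_forall_le_abs_sub {K : Set ℝ} {E : ℝ} (hK : IsClosed K) (hE : E ∉ K) :
    ∃ ε > 0, ∀ z ∈ ball E ε, ∀ x ∈ K, ε ≤ |z - x| := by
  obtain ⟨r, hr, hrK⟩ := Metric.isOpen_iff.1 hK.isOpen_compl E hE
  refine ⟨r / 2, by positivity, fun z hz x hx => ?_⟩
  have hxE : r ≤ dist x E := not_lt.1 fun h => hrK (mem_ball.2 h) hx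
  have := dist_triangle x z E
  rw [mem_ball] at hz
  rw [← Real.dist_eq, dist_comm]
  linarith

noncomputable def markov (μ : Measure ℝ) (z : ℝ) : ℝ := ∫ x, (z - x)⁻¹ ∂μ

noncomputable def markovSq (μ : Measure ℝ) (z : ℝ) : ℝ := ∫ x, (z - x)⁻¹ ^ 2 ∂μ

section ClosedSupport

variable {μ : Measure ℝ} [IsFiniteMeasure μ] {K : Set ℝ} {E : ℝ}

theorem integrable_inv_sub_pow (hK : IsClosed K) (hμ : ∀ᵐ x ∂μ, x ∈ K) (hE : E ∉ K) (n : ℕ) :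
    Integrable (fun x => (E - x)⁻¹ ^ n) μ := by
  obtain ⟨ε, hε, hsep⟩ := exists_pos_forall_le_abs_sub hK hE
  refine .of_bound (by fun_prop) (ε⁻¹ ^ n) ?_
  filter_upwards [hμ] with x hx
  rw [norm_pow, norm_inv, Real.norm_eq_abs]
  gcongr
  exact hsep E (mem_ball_self hε) x hx

theorem integrable_inv_sub (hK : IsClosed K) (hμ : ∀ᵐ x ∂μ, x ∈ K) (hE : E ∉ K) :
    Integrable (fun x => (E - x)⁻¹) μ := by
  simpa using integrable_inv_sub_pow hK hμ hE 1

theorem hasDerivAt_markov (hK : IsClosed K) (hμ : ∀ᵐ x ∂μ, x ∈ K) (hE : E ∉ K) :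
    HasDerivAt (markov μ) (-markovSq μ E) E := by
  obtain ⟨ε, hε, hsep⟩ := exists_pos_forall_le_abs_sub hK hE
  have hne : ∀ z ∈ ball E ε, ∀ x ∈ K, z - x ≠ 0 := fun z hz x hx h =>
    hε.not_ge (by simpa [h] using hsep z hz x hx)
  have := hasDerivAt_integral_of_dominated_loc_of_deriv_le (ball_mem_nhds E hε)
    (F := fun z x => (z - x)⁻¹) (F' := fun z x => -(z - x)⁻¹ ^ 2) (bound := fun _ => ε⁻¹ ^ 2)
    (.of_forall fun z => by fun_prop) (integrable_inv_sub hK hμ hE)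
    (integrable_inv_sub_pow hK hμ hE 2).neg.aestronglyMeasurable
    (by
      filter_upwards [hμ] with x hx z hz
      rw [norm_neg, norm_pow, norm_inv, Real.norm_eq_abs]
      gcongr
      exact hsep z hz x hx)
    (integrable_const _)
    (by
      filter_upwards [hμ] with x hx z hz
      simpa [div_eq_mul_inv, inv_pow] using ((hasDerivAt_id z).sub_const x).fun_inv (hne z hz x hx))
  rw [integral_neg] at this
  exact this.2

end ClosedSupport

theorem inv_sub_mem_Icc {α β E x : ℝ} (hx : x ∈ Icc α β) (hE : E ∉ Icc α β) :
    (E - x)⁻¹ ∈ Icc (E - α)⁻¹ (E - β)⁻¹ := by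
  obtain ⟨hαx, hxβ⟩ := hx
  rcases not_and_or.1 hE with hEα | hβE <;> rw [not_le] at *
  · exact ⟨(inv_le_inv_of_neg (by linarith) (by linarith)).2 (by linarith),
      (inv_le_inv_of_neg (by linarith) (by linarith)).2 (by linarith)⟩
  · exact ⟨inv_anti₀ (by linarith) (by linarith), inv_anti₀ (by linarith) (by linarith)⟩

section Interval

variable {μ : Measure ℝ} {α β E : ℝ}

theorem markov_mem_Icc [IsProbabilityMeasure μ] (hμ : ∀ᵐ x ∂μ, x ∈ Icc α β)
    (hE : E ∉ Icc α β) : markov μ E ∈ Icc (E - α)⁻¹ (E - β)⁻¹ := by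
  have hint := integrable_inv_sub isClosed_Icc hμ hE
  have hbound : ∀ᵐ x ∂μ, (E - x)⁻¹ ∈ Icc (E - α)⁻¹ (E - β)⁻¹ := by
    filter_upwards [hμ] with x hx using inv_sub_mem_Icc hx hE
  constructor
  · simpa [markov] using integral_mono_ae (integrable_const _) hint (hbound.mono fun x hx => hx.1)
  · simpa [markov] using integral_mono_ae hint (integrable_const _) (hbound.mono fun x hx => hx.2)

variable [IsFiniteMeasure μ]

theorem markovSq_mem_Icc {c d : ℝ} (hμ : ∀ᵐ x ∂μ, x ∈ Icc α β) (hE : E ∉ Icc α β)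
    (h : ∀ᵐ x ∂μ, (E - x)⁻¹ ^ 2 ∈ Icc (c * (E - x)⁻¹) (d * (E - x)⁻¹)) :
    markovSq μ E ∈ Icc (c * markov μ E) (d * markov μ E) := by
  have hint := integrable_inv_sub isClosed_Icc hμ hE
  have hint2 := integrable_inv_sub_pow isClosed_Icc hμ hE 2
  constructor
  · simpa [markov, markovSq, integral_const_mul] using
      integral_mono_ae (hint.const_mul c) hint2 (h.mono fun x hx => hx.1)
  · simpa [markov, markovSq, integral_const_mul] using
      integral_mono_ae hint2 (hint.const_mul d) (h.mono fun x hx => hx.2)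

theorem markovSq_mem_Icc_of_lt (hμ : ∀ᵐ x ∂μ, x ∈ Icc α β) (hβE : β < E) :
    markovSq μ E ∈ Icc ((E - α)⁻¹ * markov μ E) ((E - β)⁻¹ * markov μ E) := by
  have hE : E ∉ Icc α β := fun h => hβE.not_ge h.2
  refine markovSq_mem_Icc hμ hE ?_
  filter_upwards [hμ] with x hx
  have hφ := inv_sub_mem_Icc hx hE
  have hpos : 0 < (E - x)⁻¹ := inv_pos.2 (by linarith [hx.2])
  rw [sq]
  exact ⟨mul_le_mul_of_nonneg_right hφ.1 hpos.le, mul_le_mul_of_nonneg_right hφ.2 hpos.le⟩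

theorem markovSq_mem_Icc_of_gt (hμ : ∀ᵐ x ∂μ, x ∈ Icc α β) (hEα : E < α) :
    markovSq μ E ∈ Icc ((E - β)⁻¹ * markov μ E) ((E - α)⁻¹ * markov μ E) := by
  have hE : E ∉ Icc α β := fun h => hEα.not_ge h.1
  refine markovSq_mem_Icc hμ hE ?_
  filter_upwards [hμ] with x hx
  have hφ := inv_sub_mem_Icc hx hE
  have hneg : (E - x)⁻¹ < 0 := inv_lt_zero.2 (by linarith [hx.1])
  rw [sq]
  exact ⟨mul_le_mul_of_nonpos_right hφ.2 hneg.le, mul_le_mul_of_nonpos_right hφ.1 hneg.le⟩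

end Interval

theorem exists_mem_Ioo_pos_of_deriv_pos {f : ℝ → ℝ} {a b : ℝ} (hf : 0 < deriv f a)
    (ha : f a = 0) (hab : a < b) : ∃ u ∈ Ioo a b, 0 < f u := by
  obtain ⟨u, hsign, hu⟩ :=
    (((eventually_nhdsWithin_sign_eq_of_deriv_pos hf ha).filter_mono nhdsWithin_le_nhds).and
      (Ioo_mem_nhdsGT hab)).exists
  exact ⟨u, hu, by rwa [sign_pos (sub_pos.2 hu.1), sign_eq_one_iff] at hsign⟩

theorem exists_mem_Ioo_neg_of_deriv_pos {f : ℝ → ℝ} {a b : ℝ} (hf : 0 < deriv f b)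
    (hb : f b = 0) (hab : a < b) : ∃ u ∈ Ioo a b, f u < 0 := by
  obtain ⟨u, hsign, hu⟩ :=
    (((eventually_nhdsWithin_sign_eq_of_deriv_pos hf hb).filter_mono nhdsWithin_le_nhds).and
      (Ioo_mem_nhdsLT hab)).exists
  exact ⟨u, hu, by rwa [sign_neg (sub_neg.2 hu.2), sign_eq_neg_one_iff] at hsign⟩

theorem Set.OrdConnected.subsingleton_zeros_of_deriv_pos {f : ℝ → ℝ} {S : Set ℝ}
    (hS : S.OrdConnected) (hf : ContinuousOn f S) (hd : ∀ x ∈ S, f x = 0 → 0 < deriv f x) :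
    {x ∈ S | f x = 0}.Subsingleton := by
  suffices ∀ a ∈ S, ∀ b ∈ S, f a = 0 → f b = 0 → ¬a < b by
    intro a ⟨ha, hfa⟩ b ⟨hb, hfb⟩
    by_contra hne
    rcases lt_or_gt_of_ne hne with h | h
    exacts [this a ha b hb hfa hfb h, this b hb a ha hfb hfa h]
  intro a ha b hb hfa hfb hab
  have hcont : ContinuousOn f (Icc a b) := hf.mono (hS.out ha hb)
  obtain ⟨u, hu, hfu⟩ := exists_mem_Ioo_pos_of_deriv_pos (hd a ha hfa) hfa hab
  -- `f > 0` at `u`, `f < 0` just left of the first zero after `u`: the intermediate value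
  -- theorem gives an earlier one
  set Z := Icc u b ∩ f ⁻¹' {0}
  have hZ : IsCompact Z := isCompact_Icc.of_isClosed_subset
    ((hcont.mono (Icc_subset_Icc_left hu.1.le)).preimage_isClosed_of_isClosed isClosed_Icc
      isClosed_singleton) inter_subset_left
  obtain ⟨⟨huc, hcb⟩, hfc⟩ : sInf Z ∈ Z := hZ.sInf_mem ⟨b, ⟨hu.2.le, le_rfl⟩, hfb⟩
  have huc : u < sInf Z := huc.lt_of_ne fun h => hfu.ne' (h ▸ hfc)
  obtain ⟨y, hy, hfy⟩ := exists_mem_Ioo_neg_of_deriv_pos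
    (hd _ (hS.out ha hb ⟨hu.1.le.trans huc.le, hcb⟩) hfc) hfc huc
  obtain ⟨z, hz, hfz⟩ := intermediate_value_Icc' hy.1.le
    (hcont.mono (Icc_subset_Icc hu.1.le (hy.2.le.trans hcb))) ⟨hfy.le, hfu.le⟩
  have : sInf Z ≤ z := csInf_le hZ.bddBelow ⟨⟨hz.1, hz.2.trans (hy.2.le.trans hcb)⟩, hfz⟩
  linarith [hz.2, hy.2]

theorem Set.OrdConnected.subsingleton_zeros_of_deriv_neg {f : ℝ → ℝ} {S : Set ℝ}
    (hS : S.OrdConnected) (hf : ContinuousOn f S) (hd : ∀ x ∈ S, f x = 0 → deriv f x < 0) :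
    {x ∈ S | f x = 0}.Subsingleton := by
  simpa using hS.subsingleton_zeros_of_deriv_pos (f := -f) hf.neg fun x hx h0 => by
    simpa [deriv.neg] using hd x hx (neg_eq_zero.1 h0)

theorem le_of_ae_mem_Icc {μ : Measure ℝ} [NeZero μ] {α β : ℝ} (h : ∀ᵐ x ∂μ, x ∈ Icc α β) :
    α ≤ β :=
  let ⟨_, hx⟩ := h.exists
  hx.1.trans hx.2

theorem markov_ne_zero {μ : Measure ℝ} [IsProbabilityMeasure μ] {α β E : ℝ}
    (hμ : ∀ᵐ x ∂μ, x ∈ Icc α β) (hE : E ∉ Icc α β) : markov μ E ≠ 0 := by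
  obtain ⟨hp, hq⟩ := markov_mem_Icc hμ hE
  have hαβ := le_of_ae_mem_Icc hμ
  rcases not_and_or.1 hE with hEα | hβE <;> rw [not_le] at *
  · exact (hq.trans_lt (inv_lt_zero.2 (by linarith))).ne
  · exact ((inv_pos.2 (by linarith)).trans_le hp).ne'

theorem Iio_union_Ioo_union_Ioi_eq_compl {α₁ β₁ α₂ β₂ : ℝ} (h₁ : α₁ ≤ β₁) (hsep : β₁ < α₂)
    (h₂ : α₂ ≤ β₂) : Iio α₁ ∪ Ioo β₁ α₂ ∪ Ioi β₂ = (Icc α₁ β₁ ∪ Icc α₂ β₂)ᶜ := by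
  ext x
  simp only [mem_union, mem_compl_iff, mem_Icc, mem_Iio, mem_Ioo, mem_Ioi]
  grind

theorem mul_add_mul_neg_of_eq_zero {ϰ₁ ϰ₂ f₁ f₂ S₁ S₂ q p : ℝ} (h0 : ϰ₁ * f₁ + ϰ₂ * f₂ = 0)
    (hqp : q < p) (hϰf : ϰ₂ * f₂ < 0) (hS₁ : ϰ₁ * S₁ ≤ ϰ₁ * (q * f₁))
    (hS₂ : ϰ₂ * S₂ ≤ ϰ₂ * (p * f₂)) : ϰ₁ * S₁ + ϰ₂ * S₂ < 0 :=
  calc ϰ₁ * S₁ + ϰ₂ * S₂ ≤ ϰ₁ * (q * f₁) + ϰ₂ * (p * f₂) := add_le_add hS₁ hS₂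
    _ = q * (ϰ₁ * f₁ + ϰ₂ * f₂) + (p - q) * (ϰ₂ * f₂) := by ring
    _ < 0 := by
      rw [h0, mul_zero, zero_add]
      exact mul_neg_of_pos_of_neg (sub_pos.2 hqp) hϰf

noncomputable def markovComb (ϰ₁ ϰ₂ : ℝ) (μ₁ μ₂ : Measure ℝ) (z : ℝ) : ℝ :=
  ϰ₁ * markov μ₁ z + ϰ₂ * markov μ₂ z

section Angelesco

variable {μ₁ μ₂ : Measure ℝ} {α₁ β₁ α₂ β₂ ϰ₁ ϰ₂ E : ℝ}

theorem hasDerivAt_markovComb [IsFiniteMeasure μ₁] [IsFiniteMeasure μ₂]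
    (h₁ : ∀ᵐ x ∂μ₁, x ∈ Icc α₁ β₁) (h₂ : ∀ᵐ x ∂μ₂, x ∈ Icc α₂ β₂)
    (hE : E ∉ Icc α₁ β₁ ∪ Icc α₂ β₂) :
    HasDerivAt (markovComb ϰ₁ ϰ₂ μ₁ μ₂) (-(ϰ₁ * markovSq μ₁ E + ϰ₂ * markovSq μ₂ E)) E := by
  rw [mem_union, not_or] at hE
  have h := ((hasDerivAt_markov isClosed_Icc h₁ hE.1).const_mul ϰ₁).add
    ((hasDerivAt_markov isClosed_Icc h₂ hE.2).const_mul ϰ₂)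
  rw [mul_neg, mul_neg, ← neg_add] at h
  exact h

variable [IsProbabilityMeasure μ₁] [IsProbabilityMeasure μ₂]

theorem deriv_markovComb_pos_of_lt (h₁ : ∀ᵐ x ∂μ₁, x ∈ Icc α₁ β₁)
    (h₂ : ∀ᵐ x ∂μ₂, x ∈ Icc α₂ β₂) (hsep : β₁ < α₂) (hϰ : ϰ₁ + ϰ₂ = 1) (hE : E < α₁)
    (h0 : markovComb ϰ₁ ϰ₂ μ₁ μ₂ E = 0) :
    ϰ₁ < 0 ∧ 0 < deriv (markovComb ϰ₁ ϰ₂ μ₁ μ₂) E := by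
  have hα₁ := le_of_ae_mem_Icc h₁
  have hα₂ := le_of_ae_mem_Icc h₂
  have hE₁ : E ∉ Icc α₁ β₁ := fun h => hE.not_ge h.1
  have hEα₂ : E < α₂ := hE.trans_le (hα₁.trans hsep.le)
  have hE₂ : E ∉ Icc α₂ β₂ := fun h => hEα₂.not_ge h.1
  obtain ⟨-, hf₁⟩ := markov_mem_Icc h₁ hE₁
  obtain ⟨hf₂, hf₂'⟩ := markov_mem_Icc h₂ hE₂
  have hqp : (E - β₁)⁻¹ < (E - α₂)⁻¹ :=
    (inv_lt_inv_of_neg (by linarith) (by linarith)).2 (by linarith)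
  have hf₂neg : markov μ₂ E < 0 := hf₂'.trans_lt (inv_lt_zero.2 (by linarith))
  unfold markovComb at h0
  -- `ϰ₂ (f₂ - f₁) = -f₁` with `f₁ < f₂ < 0`, then `ϰ₁ f₁ = -ϰ₂ f₂ > 0`
  have hϰ₂ : 0 < ϰ₂ := by nlinarith
  have hϰ₁ : ϰ₁ < 0 := by nlinarith
  refine ⟨hϰ₁, ?_⟩
  rw [(hasDerivAt_markovComb h₁ h₂ (by simp [hE₁, hE₂])).deriv, neg_pos]
  exact mul_add_mul_neg_of_eq_zero h0 hqp (mul_neg_of_pos_of_neg hϰ₂ hf₂neg)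
    (mul_le_mul_of_nonpos_left (markovSq_mem_Icc_of_gt h₁ hE).1 hϰ₁.le)
    (mul_le_mul_of_nonneg_left (markovSq_mem_Icc_of_gt h₂ hEα₂).2 hϰ₂.le)

theorem deriv_markovComb_pos_of_gt (h₁ : ∀ᵐ x ∂μ₁, x ∈ Icc α₁ β₁)
    (h₂ : ∀ᵐ x ∂μ₂, x ∈ Icc α₂ β₂) (hsep : β₁ < α₂) (hϰ : ϰ₁ + ϰ₂ = 1) (hE : β₂ < E)
    (h0 : markovComb ϰ₁ ϰ₂ μ₁ μ₂ E = 0) :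
    ϰ₂ < 0 ∧ 0 < deriv (markovComb ϰ₁ ϰ₂ μ₁ μ₂) E := by
  have hα₂ := le_of_ae_mem_Icc h₂
  have hβ₁E : β₁ < E := hsep.trans_le (hα₂.trans hE.le)
  have hE₁ : E ∉ Icc α₁ β₁ := fun h => hβ₁E.not_ge h.2
  have hE₂ : E ∉ Icc α₂ β₂ := fun h => hE.not_ge h.2
  obtain ⟨hf₁', hf₁⟩ := markov_mem_Icc h₁ hE₁
  obtain ⟨hf₂, -⟩ := markov_mem_Icc h₂ hE₂
  have hqp : (E - β₁)⁻¹ < (E - α₂)⁻¹ := inv_strictAnti₀ (by linarith) (by linarith)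
  have hf₁pos : 0 < markov μ₁ E := (inv_pos.2 (by linarith [le_of_ae_mem_Icc h₁])).trans_le hf₁'
  unfold markovComb at h0
  -- `ϰ₂ (f₂ - f₁) = -f₁` with `0 < f₁ < f₂`
  have hϰ₂ : ϰ₂ < 0 := by nlinarith
  refine ⟨hϰ₂, ?_⟩
  rw [(hasDerivAt_markovComb h₁ h₂ (by simp [hE₁, hE₂])).deriv, neg_pos]
  exact mul_add_mul_neg_of_eq_zero h0 hqp (mul_neg_of_neg_of_pos hϰ₂ (by linarith))
    (mul_le_mul_of_nonneg_left (markovSq_mem_Icc_of_lt h₁ hβ₁E).2 (by linarith))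
    (mul_le_mul_of_nonpos_left (markovSq_mem_Icc_of_lt h₂ hE).1 hϰ₂.le)

theorem deriv_markovComb_neg_of_mem_Ioo (h₁ : ∀ᵐ x ∂μ₁, x ∈ Icc α₁ β₁)
    (h₂ : ∀ᵐ x ∂μ₂, x ∈ Icc α₂ β₂) (hϰ : ϰ₁ + ϰ₂ = 1) (hE : E ∈ Ioo β₁ α₂)
    (h0 : markovComb ϰ₁ ϰ₂ μ₁ μ₂ E = 0) :
    0 < ϰ₁ ∧ 0 < ϰ₂ ∧ deriv (markovComb ϰ₁ ϰ₂ μ₁ μ₂) E < 0 := by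
  have hE₁ : E ∉ Icc α₁ β₁ := fun h => hE.1.not_ge h.2
  have hE₂ : E ∉ Icc α₂ β₂ := fun h => hE.2.not_ge h.1
  have hp₁ : 0 < (E - α₁)⁻¹ := inv_pos.2 (by linarith [le_of_ae_mem_Icc h₁, hE.1])
  have hq₂ : (E - β₂)⁻¹ < 0 := inv_lt_zero.2 (by linarith [le_of_ae_mem_Icc h₂, hE.2])
  have hf₁ : 0 < markov μ₁ E := hp₁.trans_le (markov_mem_Icc h₁ hE₁).1
  have hf₂ : markov μ₂ E < 0 := (markov_mem_Icc h₂ hE₂).2.trans_lt hq₂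
  have hS₁ : 0 < markovSq μ₁ E :=
    (mul_pos hp₁ hf₁).trans_le (markovSq_mem_Icc_of_lt h₁ hE.1).1
  have hS₂ : 0 < markovSq μ₂ E :=
    (mul_pos_of_neg_of_neg hq₂ hf₂).trans_le (markovSq_mem_Icc_of_gt h₂ hE.2).1
  unfold markovComb at h0
  have hϰ₁ : 0 < ϰ₁ := by nlinarith
  have hϰ₂ : 0 < ϰ₂ := by nlinarith
  refine ⟨hϰ₁, hϰ₂, ?_⟩
  rw [(hasDerivAt_markovComb h₁ h₂ (by simp [hE₁, hE₂])).deriv, neg_neg_iff_pos]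
  positivity

theorem markovComb_zeros_subsingleton (h₁ : ∀ᵐ x ∂μ₁, x ∈ Icc α₁ β₁)
    (h₂ : ∀ᵐ x ∂μ₂, x ∈ Icc α₂ β₂) (hsep : β₁ < α₂) (hϰ : ϰ₁ + ϰ₂ = 1) :
    {E | E ∉ Icc α₁ β₁ ∪ Icc α₂ β₂ ∧ markovComb ϰ₁ ϰ₂ μ₁ μ₂ E = 0}.Subsingleton := by
  have hR := Iio_union_Ioo_union_Ioi_eq_compl (le_of_ae_mem_Icc h₁) hsep (le_of_ae_mem_Icc h₂)
  have hcont : ContinuousOn (markovComb ϰ₁ ϰ₂ μ₁ μ₂) (Iio α₁ ∪ Ioo β₁ α₂ ∪ Ioi β₂) :=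
    fun x hx => (hasDerivAt_markovComb h₁ h₂ (hR.subset hx)).continuousAt.continuousWithinAt
  have left E (hE : E < α₁) := deriv_markovComb_pos_of_lt h₁ h₂ hsep hϰ hE
  have gap E (hE : E ∈ Ioo β₁ α₂) := deriv_markovComb_neg_of_mem_Ioo h₁ h₂ hϰ hE
  have right E (hE : β₂ < E) := deriv_markovComb_pos_of_gt h₁ h₂ hsep hϰ hE
  rintro E ⟨hE, hE0⟩ E' ⟨hE', hE'0⟩
  rw [← mem_compl_iff, ← hR] at hE hE'
  rcases hE with (hE | hE) | hE <;> rcases hE' with (hE' | hE') | hE'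
  · exact ordConnected_Iio.subsingleton_zeros_of_deriv_pos
      (hcont.mono (subset_union_left.trans subset_union_left))
      (fun E hE h0 => (left E hE h0).2) ⟨hE, hE0⟩ ⟨hE', hE'0⟩
  · linarith [(left E hE hE0).1, (gap E' hE' hE'0).1]
  · linarith [(left E hE hE0).1, (right E' hE' hE'0).1]
  · linarith [(gap E hE hE0).1, (left E' hE' hE'0).1]
  · exact ordConnected_Ioo.subsingleton_zeros_of_deriv_neg
      (hcont.mono (subset_union_right.trans subset_union_left))
      (fun E hE h0 => (gap E hE h0).2.2) ⟨hE, hE0⟩ ⟨hE', hE'0⟩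
  · linarith [(gap E hE hE0).2.1, (right E' hE' hE'0).1]
  · linarith [(right E hE hE0).1, (left E' hE' hE'0).1]
  · linarith [(right E hE hE0).1, (gap E' hE' hE'0).2.1]
  · exact ordConnected_Ioi.subsingleton_zeros_of_deriv_pos (hcont.mono subset_union_right)
      (fun E hE h0 => (right E hE h0).2) ⟨hE, hE0⟩ ⟨hE', hE'0⟩

theorem markovComb_zeros_eq_empty (h₁ : ∀ᵐ x ∂μ₁, x ∈ Icc α₁ β₁)
    (h₂ : ∀ᵐ x ∂μ₂, x ∈ Icc α₂ β₂) (hϰ : ϰ₁ = 1 ∧ ϰ₂ = 0 ∨ ϰ₁ = 0 ∧ ϰ₂ = 1) :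
    {E | E ∉ Icc α₁ β₁ ∪ Icc α₂ β₂ ∧ markovComb ϰ₁ ϰ₂ μ₁ μ₂ E = 0} = ∅ := by
  refine eq_empty_iff_forall_notMem.2 fun E ⟨hE, h0⟩ => ?_
  rw [mem_union, not_or] at hE
  rcases hϰ with ⟨rfl, rfl⟩ | ⟨rfl, rfl⟩
  · exact markov_ne_zero h₁ hE.1 (by simpa [markovComb] using h0)
  · exact markov_ne_zero h₂ hE.2 (by simpa [markovComb] using h0)

theorem exists_hasDerivAt_markovComb_ne_zero (h₁ : ∀ᵐ x ∂μ₁, x ∈ Icc α₁ β₁)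
    (h₂ : ∀ᵐ x ∂μ₂, x ∈ Icc α₂ β₂) (hsep : β₁ < α₂) (hϰ : ϰ₁ + ϰ₂ = 1)
    (hE : E ∉ Icc α₁ β₁ ∪ Icc α₂ β₂) (h0 : markovComb ϰ₁ ϰ₂ μ₁ μ₂ E = 0) :
    ∃ d ≠ 0, HasDerivAt (markovComb ϰ₁ ϰ₂ μ₁ μ₂) d E := by
  refine ⟨_, ?_, (hasDerivAt_markovComb h₁ h₂ hE).differentiableAt.hasDerivAt⟩
  rw [← mem_compl_iff, ← Iio_union_Ioo_union_Ioi_eq_compl (le_of_ae_mem_Icc h₁) hsep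
    (le_of_ae_mem_Icc h₂)] at hE
  rcases hE with (hE | hE) | hE
  · exact (deriv_markovComb_pos_of_lt h₁ h₂ hsep hϰ hE h0).2.ne'
  · exact (deriv_markovComb_neg_of_mem_Ioo h₁ h₂ hϰ hE h0).2.2.ne
  · exact (deriv_markovComb_pos_of_gt h₁ h₂ hsep hϰ hE h0).2.ne'

end Angelesco

theorem stmt7_general
    (μ₁ μ₂ : Measure ℝ) [IsFiniteMeasure μ₁] [IsFiniteMeasure μ₂]
    (α₁ β₁ α₂ β₂ : ℝ)
    (hsupp1 : μ₁ (Set.Icc α₁ β₁)ᶜ = 0) (hsupp2 : μ₂ (Set.Icc α₂ β₂)ᶜ = 0)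
    (hα₁ : α₁ ∈ msupport μ₁)
    (hα₂ : α₂ ∈ msupport μ₂)
    (hsep : β₁ < α₂)
    (ϰ₁ ϰ₂ : ℝ) (hϰ : ϰ₁ + ϰ₂ = 1)
    (L : ℝ → ℝ)
    (hLdef : L = fun z => (ϰ₁ / (μ₁ Set.univ).toReal) * (∫ x, (z - x)⁻¹ ∂μ₁)
        + (ϰ₂ / (μ₂ Set.univ).toReal) * (∫ x, (z - x)⁻¹ ∂μ₂))
    (Eϰ : Set ℝ)
    (hEϰ : Eϰ = {E : ℝ | E ∉ Set.Icc α₁ β₁ ∪ Set.Icc α₂ β₂ ∧ L E = 0}) :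
    Eϰ.Subsingleton ∧
    ((ϰ₁ = 1 ∧ ϰ₂ = 0) ∨ (ϰ₁ = 0 ∧ ϰ₂ = 1) → Eϰ = ∅) ∧
    (∀ E ∈ Eϰ, ∃ d : ℝ, d ≠ 0 ∧ HasDerivAt L d E) := by
  have : NeZero μ₁ := ⟨Measure.measure_univ_ne_zero.1 (hα₁ univ univ_mem)⟩
  have : NeZero μ₂ := ⟨Measure.measure_univ_ne_zero.1 (hα₂ univ univ_mem)⟩
  have hL : L = markovComb ϰ₁ ϰ₂ ((μ₁ univ)⁻¹ • μ₁) ((μ₂ univ)⁻¹ • μ₂) := by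
    ext z
    simp [hLdef, markovComb, markov, integral_smul_measure, div_eq_mul_inv, mul_assoc]
  subst hL hEϰ
  have h₁ := Measure.ae_smul_measure (mem_ae_iff.2 hsupp1) (μ₁ univ)⁻¹
  have h₂ := Measure.ae_smul_measure (mem_ae_iff.2 hsupp2) (μ₂ univ)⁻¹
  exact ⟨markovComb_zeros_subsingleton h₁ h₂ hsep hϰ, markovComb_zeros_eq_empty h₁ h₂,
    fun E hE => exists_hasDerivAt_markovComb_ne_zero h₁ h₂ hsep hϰ hE.1 hE.2⟩

/-- For an Angelesco system and `ϰ₁ + ϰ₂ = 1`, the set `E_ϰ` of zeros of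
`L = (ϰ₁/μ₁(ℝ))μ̂₁ + (ϰ₂/μ₂(ℝ))μ̂₂` in `ℝ ∖ (Δ₁ ∪ Δ₂)` contains at most one point, it is
empty when `ϰ = (1,0)` or `ϰ = (0,1)`, and every `E ∈ E_ϰ` is a simple zero of `L`. -/
theorem stmt7
    (μ₁ μ₂ : Measure ℝ) [IsFiniteMeasure μ₁] [IsFiniteMeasure μ₂]
    (α₁ β₁ α₂ β₂ : ℝ)
    (hsupp1 : μ₁ (Set.Icc α₁ β₁)ᶜ = 0) (hsupp2 : μ₂ (Set.Icc α₂ β₂)ᶜ = 0)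
    (hinf1 : (msupport μ₁).Infinite) (hinf2 : (msupport μ₂).Infinite)
    (hα₁ : α₁ ∈ msupport μ₁) (hβ₁ : β₁ ∈ msupport μ₁)
    (hα₂ : α₂ ∈ msupport μ₂) (hβ₂ : β₂ ∈ msupport μ₂)
    (hsep : β₁ < α₂)
    (ϰ₁ ϰ₂ : ℝ) (hϰ : ϰ₁ + ϰ₂ = 1)
    (L : ℝ → ℝ)
    (hLdef : L = fun z => (ϰ₁ / (μ₁ Set.univ).toReal) * (∫ x, (z - x)⁻¹ ∂μ₁)
        + (ϰ₂ / (μ₂ Set.univ).toReal) * (∫ x, (z - x)⁻¹ ∂μ₂))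
    (Eϰ : Set ℝ)
    (hEϰ : Eϰ = {E : ℝ | E ∉ Set.Icc α₁ β₁ ∪ Set.Icc α₂ β₂ ∧ L E = 0}) :
    Eϰ.Subsingleton ∧
    ((ϰ₁ = 1 ∧ ϰ₂ = 0) ∨ (ϰ₁ = 0 ∧ ϰ₂ = 1) → Eϰ = ∅) ∧
    (∀ E ∈ Eϰ, ∃ d : ℝ, d ≠ 0 ∧ HasDerivAt L d E) :=
  stmt7_general μ₁ μ₂ α₁ β₁ α₂ β₂ hsupp1 hsupp2 hα₁ hα₂ hsep ϰ₁ ϰ₂ hϰ L hLdef Eϰ hEϰ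
end

section
/- Let (μ₁, μ₂) be a Nikishin system with parameter measure τ, let τ_d be the dual measure of τ, let P_n be the monic type II multiple orthogonal polynomials with h_{n,j} = ∫ x^{n_j} P_n(x) dμ_j(x), and define the functions of the second kind R_{n,j}(z) = ∫ P_n(x) dμ_j(x)/(z − x) for j ∈ {1,2}. Then for every n = (n₁, n₂) with n₁, n₂ ≥ 0: (i) ∫ x^k R_{n,1}(x) dτ(x) = 0 for every integer k with 0 ≤ k ≤ min{n₁, n₂ − 1}; (ii) ∫ x^k R_{n,2}(x) dτ_d(x) = 0 for every integer k with 0 ≤ k ≤ min{n₁ − 1, n₂ − 2}; (iii) if n₂ ≤ n₁ then ∫ x^{n₂} R_{n,1}(x) dτ(x) = −h_{n,2}; (iv) if n₂ ≥ n₁ + 2 then ∫ x^{n₁} R_{n,2}(x) dτ_d(x) = h_{n,1}; (v) if n₂ = n₁ + 1 then τ(ℝ) h_{n,1} − h_{n,2} = ∫ x^{n₂} R_{n,1}(x) dτ(x) = τ(ℝ) ∫ x^{n₁} R_{n,2}(x) dτ_d(x). -/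
open MeasureTheory

open Set Finset Filter

/-!
Expanding `x ^ k / (x - y) = ∑ i < k, x ^ i * y ^ (k - 1 - i) - y ^ k / (y - x)` and using Fubini,
the `k`-th moment against `ν` of `x ↦ ∫ g(y) / (x - y) dμ(y)` becomes the sum of the products of
the moments of `ν` with the moments of `g μ`, minus `∫ ν̂(y) y ^ k g(y) dμ(y)`, where `ν̂` is the
Cauchy transform. For `(ν, μ) = (τ, μ₁)` that last term is a `μ₂`-moment, since `dμ₂ = τ̂ dμ₁`.
For `(ν, μ) = (τ_d, μ₂)` the duality relation `τ̂_d(y) = y / m₀ - m₁ / m₀² - 1 / τ̂(y)` turns it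
into `μ₂`-moments of `y ^ (k + 1) g` and `y ^ k g` and the `μ₁`-moment of `y ^ k g`. For
`g = P_n` the orthogonality conditions then kill every term except those giving `h_{n,1}` and
`h_{n,2}`.
-/

noncomputable def cauchyTransform (ν : Measure ℝ) (z : ℝ) : ℝ := ∫ t, (z - t)⁻¹ ∂ν

theorem sum_range_mul_sub_eq_zero {R : Type*} [NonUnitalNonAssocSemiring R] {m b : ℕ → R}
    {k : ℕ} (hb : ∀ j < k, b j = 0) : ∑ i ∈ range k, m i * b (k - 1 - i) = 0 :=
  sum_eq_zero fun i hi => by rw [hb _ (by have := mem_range.1 hi; omega), mul_zero]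

theorem sum_range_succ_mul_sub_eq {R : Type*} [NonUnitalNonAssocSemiring R] {m b : ℕ → R}
    {k : ℕ} (hb : ∀ j < k, b j = 0) :
    ∑ i ∈ range (k + 1), m i * b (k + 1 - 1 - i) = m 0 * b k := by
  rw [sum_range_succ', sum_eq_zero fun i hi => by
    rw [hb _ (by have := mem_range.1 hi; omega), mul_zero]]
  simp

theorem abs_inv_sub_le_inv_sub {b c x y : ℝ} (hbc : b < c) (hx : x ≤ b) (hy : c ≤ y) :
    |(y - x)⁻¹| ≤ (c - b)⁻¹ := by
  rw [abs_inv, abs_of_pos (by linarith)]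
  exact inv_anti₀ (by linarith) (by linarith)

theorem pow_div_sub_eq_geom_sum₂_sub {x y : ℝ} (hxy : x ≠ y) (k : ℕ) :
    x ^ k / (x - y) = ∑ i ∈ range k, x ^ i * y ^ (k - 1 - i) - (y - x)⁻¹ * y ^ k := by
  have hxy' : x - y ≠ 0 := sub_ne_zero.2 hxy
  rw [(Commute.all x y).geom_sum₂ hxy, ← neg_sub x y, inv_neg]
  field_simp
  ring

section CompactSupport

variable {ν μ : Measure ℝ} {a b c d : ℝ}

theorem integrable_of_continuousOn_Icc [IsFiniteMeasure ν] (hν : ∀ᵐ x ∂ν, x ∈ Icc a b)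
    {f : ℝ → ℝ} (hf : ContinuousOn f (Icc a b)) : Integrable f ν := by
  rw [← Measure.restrict_eq_self_of_ae_mem hν]
  exact hf.integrableOn_compact isCompact_Icc

theorem MeasureTheory.Integrable.continuousOn_Icc_mul (hμ : ∀ᵐ y ∂μ, y ∈ Icc c d)
    {f g : ℝ → ℝ} (hf : ContinuousOn f (Icc c d)) (hg : Integrable g μ) :
    Integrable (fun y => f y * g y) μ := by
  rw [← Measure.restrict_eq_self_of_ae_mem hμ] at hg ⊢
  exact IntegrableOn.continuousOn_mul hf hg isCompact_Icc

theorem integrable_inv_sub_s10 [IsFiniteMeasure ν] (hν : ∀ᵐ t ∂ν, t ≤ b) {y : ℝ} (hy : b < y) :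
    Integrable (fun t => (y - t)⁻¹) ν :=
  Integrable.of_bound (by fun_prop) _
    (hν.mono fun _ ht => abs_inv_sub_le_inv_sub hy ht le_rfl)

theorem measurable_cauchyTransform [SFinite ν] : Measurable (cauchyTransform ν) :=
  (measurable_fst.sub measurable_snd).inv.stronglyMeasurable.integral_prod_right'.measurable

theorem abs_cauchyTransform_le [IsFiniteMeasure ν] (hν : ∀ᵐ t ∂ν, t ≤ b) (hbc : b < c) {y : ℝ}
    (hy : c ≤ y) : |cauchyTransform ν y| ≤ (c - b)⁻¹ * ν.real univ :=
  show ‖∫ t, (y - t)⁻¹ ∂ν‖ ≤ _ from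
    norm_integral_le_of_norm_le_const (hν.mono fun _ ht => abs_inv_sub_le_inv_sub hbc ht hy)

theorem cauchyTransform_nonneg (hν : ∀ᵐ t ∂ν, t ≤ b) {y : ℝ} (hy : b < y) :
    0 ≤ cauchyTransform ν y :=
  integral_nonneg_of_ae (hν.mono fun _ ht => inv_nonneg.2 (by linarith))

theorem cauchyTransform_pos [IsFiniteMeasure ν] [NeZero ν] (hν : ∀ᵐ t ∂ν, t ≤ b) {y : ℝ}
    (hy : b < y) : 0 < cauchyTransform ν y := by
  have hpos : ∀ᵐ t ∂ν, 0 < (y - t)⁻¹ := hν.mono fun _ ht => inv_pos.2 (by linarith)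
  rw [cauchyTransform, integral_pos_iff_support_of_nonneg_ae (hpos.mono fun _ h => h.le)
    (integrable_inv_sub_s10 hν hy), pos_iff_ne_zero]
  intro h0
  have : ∀ᵐ _ ∂ν, False := by
    filter_upwards [hpos, measure_eq_zero_iff_ae_notMem.1 h0] with t ht hnot
    exact hnot ht.ne'
  exact NeZero.ne ν (ae_eq_bot.1 (eventually_false_iff_eq_bot.1 this))

theorem MeasureTheory.Integrable.cauchyTransform_mul [IsFiniteMeasure ν] (hν : ∀ᵐ t ∂ν, t ≤ b)
    (hbc : b < c) (hμ : ∀ᵐ y ∂μ, c ≤ y) {f : ℝ → ℝ} (hf : Integrable f μ) :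
    Integrable (fun y => cauchyTransform ν y * f y) μ :=
  hf.bdd_mul measurable_cauchyTransform.aestronglyMeasurable
    (hμ.mono fun _ hy => abs_cauchyTransform_le hν hbc hy)

theorem integral_pow_div_sub [IsFiniteMeasure ν] (hν : ∀ᵐ x ∂ν, x ∈ Icc a b) {y : ℝ}
    (hy : b < y) (k : ℕ) :
    ∫ x, x ^ k / (x - y) ∂ν
      = ∑ i ∈ range k, (∫ x, x ^ i ∂ν) * y ^ (k - 1 - i) - cauchyTransform ν y * y ^ k := by
  have hpow : ∀ i, Integrable (fun x : ℝ => x ^ i) ν := fun i =>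
    integrable_of_continuousOn_Icc hν (continuous_pow i).continuousOn
  rw [integral_congr_ae (hν.mono fun x hx =>
      pow_div_sub_eq_geom_sum₂_sub (by linarith [hx.2]) k),
    integral_sub (integrable_finsetSum _ fun i _ => (hpow i).mul_const _)
      ((integrable_inv_sub_s10 (hν.mono fun _ hx => hx.2) hy).mul_const _),
    integral_finsetSum _ fun i _ => (hpow i).mul_const _, integral_mul_const]
  simp only [integral_mul_const, cauchyTransform]

theorem integral_pow_mul_integral_div_sub [IsFiniteMeasure ν] [IsFiniteMeasure μ]
    (hν : ∀ᵐ x ∂ν, x ∈ Icc a b) (hμ : ∀ᵐ y ∂μ, y ∈ Icc c d) (hbc : b < c) {g : ℝ → ℝ}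
    (hg : Integrable g μ) (k : ℕ) :
    ∫ x, x ^ k * ∫ y, g y / (x - y) ∂μ ∂ν
      = ∑ i ∈ range k, (∫ x, x ^ i ∂ν) * ∫ y, y ^ (k - 1 - i) * g y ∂μ
        - ∫ y, cauchyTransform ν y * (y ^ k * g y) ∂μ := by
  have hprod : Integrable (fun p : ℝ × ℝ => p.1 ^ k / (p.1 - p.2) * g p.2) (ν.prod μ) := by
    refine (hg.comp_snd ν).bdd_mul (c := max |a| |b| ^ k * (c - b)⁻¹)
      (by fun_prop : Measurable fun p : ℝ × ℝ => p.1 ^ k / (p.1 - p.2)).aestronglyMeasurable ?_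
    filter_upwards [Measure.quasiMeasurePreserving_fst.ae hν,
      Measure.quasiMeasurePreserving_snd.ae hμ] with p hx hy
    rw [Real.norm_eq_abs, div_eq_mul_inv, abs_mul, abs_pow, ← neg_sub p.2 p.1, inv_neg, abs_neg]
    exact mul_le_mul (pow_le_pow_left₀ (abs_nonneg _) (abs_le_max_abs_abs hx.1 hx.2) k)
      (abs_inv_sub_le_inv_sub hbc hx.2 hy.1) (abs_nonneg _) (by positivity)
  have hfiber : ∀ᵐ y ∂μ, ∫ x, x ^ k / (x - y) * g y ∂ν
      = ∑ i ∈ range k, (∫ x, x ^ i ∂ν) * (y ^ (k - 1 - i) * g y)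
        - cauchyTransform ν y * (y ^ k * g y) := by
    filter_upwards [hμ] with y hy
    rw [integral_mul_const, integral_pow_div_sub hν (hbc.trans_le hy.1), sub_mul, sum_mul]
    simp only [mul_assoc]
  have hmoment : ∀ j, Integrable (fun y => y ^ j * g y) μ := fun j =>
    hg.continuousOn_Icc_mul hμ (continuous_pow j).continuousOn
  calc ∫ x, x ^ k * ∫ y, g y / (x - y) ∂μ ∂ν
      = ∫ x, ∫ y, x ^ k / (x - y) * g y ∂μ ∂ν := by
        congr 1 with x
        rw [← integral_const_mul]
        exact integral_congr_ae (ae_of_all _ fun y => by ring)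
    _ = ∫ y, ∫ x, x ^ k / (x - y) * g y ∂ν ∂μ := integral_integral_swap hprod
    _ = _ := by
      rw [integral_congr_ae hfiber, integral_sub (integrable_finsetSum _ fun i _ =>
          (hmoment _).const_mul _) ((hmoment k).cauchyTransform_mul
            (hν.mono fun _ hx => hx.2) hbc (hμ.mono fun _ hy => hy.1)),
        integral_finsetSum _ fun i _ => (hmoment _).const_mul _]
      simp only [integral_const_mul]

end CompactSupport

noncomputable def nikishinMeasure (μ₁ τ : Measure ℝ) : Measure ℝ :=
  μ₁.withDensity fun y => ENNReal.ofReal (cauchyTransform τ y)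

section NikishinSystem

variable {μ₁ τ τd : Measure ℝ} {a b c d : ℝ}

theorem integral_nikishinMeasure [SFinite τ] (hτ : ∀ᵐ t ∂τ, t ≤ b) (h₁ : ∀ᵐ y ∂μ₁, b < y)
    (f : ℝ → ℝ) : ∫ y, f y ∂nikishinMeasure μ₁ τ = ∫ y, cauchyTransform τ y * f y ∂μ₁ := by
  rw [nikishinMeasure, integral_withDensity_eq_integral_toReal_smul
    measurable_cauchyTransform.ennreal_ofReal (ae_of_all _ fun _ => ENNReal.ofReal_lt_top)]
  refine integral_congr_ae (h₁.mono fun y hy => ?_)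
  dsimp only
  rw [ENNReal.toReal_ofReal (cauchyTransform_nonneg hτ hy), smul_eq_mul]

theorem isFiniteMeasure_nikishinMeasure [IsFiniteMeasure μ₁] [IsFiniteMeasure τ]
    (hτ : ∀ᵐ t ∂τ, t ≤ b) (hbc : b < c) (h₁ : ∀ᵐ y ∂μ₁, c ≤ y) :
    IsFiniteMeasure (nikishinMeasure μ₁ τ) :=
  isFiniteMeasure_withDensity_ofReal (Integrable.of_bound
    measurable_cauchyTransform.aestronglyMeasurable _
    (h₁.mono fun _ hy => abs_cauchyTransform_le hτ hbc hy)).2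

theorem nikishinMeasure_absolutelyContinuous : nikishinMeasure μ₁ τ ≪ μ₁ :=
  withDensity_absolutelyContinuous _ _

theorem integral_cauchyTransform_mul_nikishinMeasure_of_dual [IsFiniteMeasure μ₁]
    [IsFiniteMeasure τ] [NeZero τ] [IsFiniteMeasure τd] (hτ : ∀ᵐ t ∂τ, t ≤ b)
    (hτd : ∀ᵐ t ∂τd, t ≤ b) (h₁ : ∀ᵐ y ∂μ₁, y ∈ Icc c d) (hbc : b < c) {α β : ℝ}
    (hdual : ∀ y ∈ Icc c d, cauchyTransform τd y = α * y + β - (cauchyTransform τ y)⁻¹)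
    {g : ℝ → ℝ} (hg : Continuous g) (k : ℕ) :
    ∫ y, cauchyTransform τd y * (y ^ k * g y) ∂nikishinMeasure μ₁ τ
      = α * ∫ y, y ^ (k + 1) * g y ∂nikishinMeasure μ₁ τ
        + β * ∫ y, y ^ k * g y ∂nikishinMeasure μ₁ τ - ∫ y, y ^ k * g y ∂μ₁ := by
  have h₂ : ∀ᵐ y ∂nikishinMeasure μ₁ τ, y ∈ Icc c d :=
    nikishinMeasure_absolutelyContinuous.ae_le h₁
  have := isFiniteMeasure_nikishinMeasure hτ hbc (h₁.mono fun _ hy => hy.1)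
  have hint : ∀ j, Integrable (fun y => y ^ j * g y) (nikishinMeasure μ₁ τ) := fun j =>
    integrable_of_continuousOn_Icc h₂ (by fun_prop)
  have hcancel : ∫ y, y ^ k * g y ∂μ₁
      = ∫ y, (cauchyTransform τ y)⁻¹ * (y ^ k * g y) ∂nikishinMeasure μ₁ τ := by
    rw [integral_nikishinMeasure hτ (h₁.mono fun _ hy => hbc.trans_le hy.1)]
    refine integral_congr_ae (h₁.mono fun y hy => ?_)
    exact (mul_inv_cancel_left₀ (cauchyTransform_pos hτ (hbc.trans_le hy.1)).ne' _).symm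
  have hsplit : ∫ y, (cauchyTransform τ y)⁻¹ * (y ^ k * g y) ∂nikishinMeasure μ₁ τ
      = ∫ y, (α * (y ^ (k + 1) * g y) + β * (y ^ k * g y)) ∂nikishinMeasure μ₁ τ
        - ∫ y, cauchyTransform τd y * (y ^ k * g y) ∂nikishinMeasure μ₁ τ := by
    have hpoly : Integrable (fun y => α * (y ^ (k + 1) * g y) + β * (y ^ k * g y))
        (nikishinMeasure μ₁ τ) := ((hint _).const_mul α).add ((hint k).const_mul β)
    rw [← integral_sub hpoly ((hint k).cauchyTransform_mul hτd hbc (h₂.mono fun _ hy => hy.1))]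
    refine integral_congr_ae (h₂.mono fun y hy => ?_)
    dsimp only
    rw [hdual y hy]
    ring
  rw [hcancel, hsplit, integral_add ((hint _).const_mul α) ((hint k).const_mul β),
    integral_const_mul, integral_const_mul]
  ring

theorem integral_pow_mul_integral_div_sub_nikishin_fst [IsFiniteMeasure μ₁] [IsFiniteMeasure τ]
    (hτ : ∀ᵐ t ∂τ, t ∈ Icc a b) (h₁ : ∀ᵐ y ∂μ₁, y ∈ Icc c d) (hbc : b < c) {g : ℝ → ℝ}
    (hg : Continuous g) (k : ℕ) :
    ∫ x, x ^ k * ∫ y, g y / (x - y) ∂μ₁ ∂τ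
      = ∑ i ∈ range k, (∫ x, x ^ i ∂τ) * ∫ y, y ^ (k - 1 - i) * g y ∂μ₁
        - ∫ y, y ^ k * g y ∂nikishinMeasure μ₁ τ := by
  rw [integral_pow_mul_integral_div_sub hτ h₁ hbc
      (integrable_of_continuousOn_Icc h₁ hg.continuousOn),
    integral_nikishinMeasure (hτ.mono fun _ ht => ht.2) (h₁.mono fun _ hy => hbc.trans_le hy.1)]

theorem integral_pow_mul_integral_div_sub_nikishin_snd [IsFiniteMeasure μ₁] [IsFiniteMeasure τ]
    [NeZero τ] [IsFiniteMeasure τd] (hτ : ∀ᵐ t ∂τ, t ∈ Icc a b) (hτd : ∀ᵐ t ∂τd, t ∈ Icc a b)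
    (h₁ : ∀ᵐ y ∂μ₁, y ∈ Icc c d) (hbc : b < c) {α β : ℝ}
    (hdual : ∀ y ∈ Icc c d, cauchyTransform τd y = α * y + β - (cauchyTransform τ y)⁻¹)
    {g : ℝ → ℝ} (hg : Continuous g) (k : ℕ) :
    ∫ x, x ^ k * ∫ y, g y / (x - y) ∂nikishinMeasure μ₁ τ ∂τd
      = ∑ i ∈ range k, (∫ x, x ^ i ∂τd) * ∫ y, y ^ (k - 1 - i) * g y ∂nikishinMeasure μ₁ τ
        - (α * ∫ y, y ^ (k + 1) * g y ∂nikishinMeasure μ₁ τ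
          + β * ∫ y, y ^ k * g y ∂nikishinMeasure μ₁ τ - ∫ y, y ^ k * g y ∂μ₁) := by
  have hτ' : ∀ᵐ t ∂τ, t ≤ b := hτ.mono fun _ ht => ht.2
  have h₂ : ∀ᵐ y ∂nikishinMeasure μ₁ τ, y ∈ Icc c d :=
    nikishinMeasure_absolutelyContinuous.ae_le h₁
  have := isFiniteMeasure_nikishinMeasure hτ' hbc (h₁.mono fun _ hy => hy.1)
  rw [integral_pow_mul_integral_div_sub hτd h₂ hbc
      (integrable_of_continuousOn_Icc h₂ hg.continuousOn),
    integral_cauchyTransform_mul_nikishinMeasure_of_dual hτ'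
      (hτd.mono fun _ ht => ht.2) h₁ hbc hdual hg]

end NikishinSystem

theorem stmt10_general
    (μ₁ τ : Measure ℝ) [IsFiniteMeasure μ₁] [IsFiniteMeasure τ]
    (aτ bτ a₁ b₁ : ℝ)
    (hcτ : τ (Set.Icc aτ bτ)ᶜ = 0) (hc₁ : μ₁ (Set.Icc a₁ b₁)ᶜ = 0)
    (haτ : aτ ∈ msupport τ)
    (hsep : bτ < a₁)
    (μ₂ : Measure ℝ)
    (hμ₂ : μ₂ = μ₁.withDensity fun x => ENNReal.ofReal (∫ t, (x - t)⁻¹ ∂τ))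
    (P : ℕ → ℕ → Polynomial ℝ)
    (horth₁ : ∀ n₁ n₂ : ℕ, ∀ m < n₁, ∫ x, (P n₁ n₂).eval x * x ^ m ∂μ₁ = 0)
    (horth₂ : ∀ n₁ n₂ : ℕ, ∀ m < n₂, ∫ x, (P n₁ n₂).eval x * x ^ m ∂μ₂ = 0)
    (h1 h2 : ℕ → ℕ → ℝ)
    (hh1 : ∀ n₁ n₂ : ℕ, h1 n₁ n₂ = ∫ x, x ^ n₁ * (P n₁ n₂).eval x ∂μ₁)
    (hh2 : ∀ n₁ n₂ : ℕ, h2 n₁ n₂ = ∫ x, x ^ n₂ * (P n₁ n₂).eval x ∂μ₂)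
    (τd : Measure ℝ) [IsFiniteMeasure τd]
    (hcd : τd (Set.Icc aτ bτ)ᶜ = 0)
    (hdual : ∀ z : ℝ, z ∉ Set.Icc aτ bτ →
      (∫ t, (z - t)⁻¹ ∂τ)⁻¹
        = z / (τ Set.univ).toReal - (∫ x, x ∂τ) / ((τ Set.univ).toReal) ^ 2
          - ∫ t, (z - t)⁻¹ ∂τd) :
    (∀ n₁ n₂ k : ℕ, k ≤ n₁ → k + 1 ≤ n₂ →
        ∫ x, x ^ k * (∫ y, (P n₁ n₂).eval y / (x - y) ∂μ₁) ∂τ = 0) ∧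
    (∀ n₁ n₂ k : ℕ, k + 1 ≤ n₁ → k + 2 ≤ n₂ →
        ∫ x, x ^ k * (∫ y, (P n₁ n₂).eval y / (x - y) ∂μ₂) ∂τd = 0) ∧
    (∀ n₁ n₂ : ℕ, n₂ ≤ n₁ →
        ∫ x, x ^ n₂ * (∫ y, (P n₁ n₂).eval y / (x - y) ∂μ₁) ∂τ = -h2 n₁ n₂) ∧
    (∀ n₁ n₂ : ℕ, n₁ + 2 ≤ n₂ →
        ∫ x, x ^ n₁ * (∫ y, (P n₁ n₂).eval y / (x - y) ∂μ₂) ∂τd = h1 n₁ n₂) ∧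
    (∀ n₁ n₂ : ℕ, n₂ = n₁ + 1 →
        (τ Set.univ).toReal * h1 n₁ n₂ - h2 n₁ n₂
            = (∫ x, x ^ n₂ * (∫ y, (P n₁ n₂).eval y / (x - y) ∂μ₁) ∂τ) ∧
        (∫ x, x ^ n₂ * (∫ y, (P n₁ n₂).eval y / (x - y) ∂μ₁) ∂τ)
            = (τ Set.univ).toReal
                * ∫ x, x ^ n₁ * (∫ y, (P n₁ n₂).eval y / (x - y) ∂μ₂) ∂τd) := by
  have hτ := mem_ae_iff.2 hcτ
  have hτd := mem_ae_iff.2 hcd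
  have h₁ := mem_ae_iff.2 hc₁
  have : NeZero τ := ⟨fun h => haτ univ univ_mem (by simp [h])⟩
  have hm₀ : τ.real univ ≠ 0 := measureReal_univ_ne_zero
  simp only [← measureReal_def] at hdual ⊢
  have hdual' : ∀ y ∈ Icc a₁ b₁, cauchyTransform τd y
      = (τ.real univ)⁻¹ * y + -(∫ x, x ∂τ) / τ.real univ ^ 2 - (cauchyTransform τ y)⁻¹ :=
    fun y hy => by
      rw [cauchyTransform, cauchyTransform, hdual y fun h => by linarith [h.2, hy.1]]
      ring
  obtain rfl : μ₂ = nikishinMeasure μ₁ τ := hμ₂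
  have hR₁ := fun n₁ n₂ => integral_pow_mul_integral_div_sub_nikishin_fst hτ h₁ hsep
    (P n₁ n₂).continuous
  have hR₂ := fun n₁ n₂ => integral_pow_mul_integral_div_sub_nikishin_snd hτ hτd h₁ hsep
    hdual' (P n₁ n₂).continuous
  have hB : ∀ n₁ n₂, ∀ j < n₁, ∫ y, y ^ j * (P n₁ n₂).eval y ∂μ₁ = 0 := fun n₁ n₂ j hj => by
    simpa only [mul_comm] using horth₁ n₁ n₂ j hj
  have hA : ∀ n₁ n₂, ∀ j < n₂, ∫ y, y ^ j * (P n₁ n₂).eval y ∂nikishinMeasure μ₁ τ = 0 :=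
    fun n₁ n₂ j hj => by simpa only [mul_comm] using horth₂ n₁ n₂ j hj
  refine ⟨fun n₁ n₂ k hk₁ hk₂ => ?_, fun n₁ n₂ k hk₁ hk₂ => ?_, fun n₁ n₂ hn => ?_,
    fun n₁ n₂ hn => ?_, fun n₁ n₂ hn => ?_⟩
  · rw [hR₁, sum_range_mul_sub_eq_zero fun j hj => hB n₁ n₂ j (by omega), hA n₁ n₂ k (by omega),
      sub_zero]
  · rw [hR₂, sum_range_mul_sub_eq_zero fun j hj => hA n₁ n₂ j (by omega),
      hA n₁ n₂ (k + 1) (by omega), hA n₁ n₂ k (by omega), hB n₁ n₂ k (by omega)]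
    ring
  · rw [hR₁, sum_range_mul_sub_eq_zero fun j hj => hB n₁ n₂ j (by omega), hh2, zero_sub]
  · rw [hR₂, sum_range_mul_sub_eq_zero fun j hj => hA n₁ n₂ j (by omega),
      hA n₁ n₂ (n₁ + 1) (by omega), hA n₁ n₂ n₁ (by omega), hh1]
    ring
  · subst hn
    have hm₀' : ∫ x, x ^ 0 ∂τ = τ.real univ := by simp
    rw [hR₁, sum_range_succ_mul_sub_eq fun j hj => hB n₁ (n₁ + 1) j hj, hm₀', hR₂,
      sum_range_mul_sub_eq_zero fun j hj => hA n₁ (n₁ + 1) j (by omega),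
      hA n₁ (n₁ + 1) n₁ (by omega), hh1, hh2]
    refine ⟨rfl, ?_⟩
    field_simp
    ring

/-- Orthogonality relations of the functions of the second kind of a Nikishin system
with respect to the parameter measure τ and its dual measure τ_d. -/
theorem stmt10
    (μ₁ τ : Measure ℝ) [IsFiniteMeasure μ₁] [IsFiniteMeasure τ]
    (aτ bτ a₁ b₁ : ℝ)
    (hcτ : τ (Set.Icc aτ bτ)ᶜ = 0) (hc₁ : μ₁ (Set.Icc a₁ b₁)ᶜ = 0)
    (hinfτ : (msupport τ).Infinite) (hinf₁ : (msupport μ₁).Infinite)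
    (haτ : aτ ∈ msupport τ) (hbτ : bτ ∈ msupport τ)
    (ha₁ : a₁ ∈ msupport μ₁) (hb₁ : b₁ ∈ msupport μ₁)
    (hsep : bτ < a₁)
    (μ₂ : Measure ℝ)
    (hμ₂ : μ₂ = μ₁.withDensity fun x => ENNReal.ofReal (∫ t, (x - t)⁻¹ ∂τ))
    (P : ℕ → ℕ → Polynomial ℝ)
    (hP : ∀ n₁ n₂ : ℕ, (P n₁ n₂).Monic ∧ (P n₁ n₂).natDegree = n₁ + n₂)
    (horth₁ : ∀ n₁ n₂ : ℕ, ∀ m < n₁, ∫ x, (P n₁ n₂).eval x * x ^ m ∂μ₁ = 0)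
    (horth₂ : ∀ n₁ n₂ : ℕ, ∀ m < n₂, ∫ x, (P n₁ n₂).eval x * x ^ m ∂μ₂ = 0)
    (h1 h2 : ℕ → ℕ → ℝ)
    (hh1 : ∀ n₁ n₂ : ℕ, h1 n₁ n₂ = ∫ x, x ^ n₁ * (P n₁ n₂).eval x ∂μ₁)
    (hh2 : ∀ n₁ n₂ : ℕ, h2 n₁ n₂ = ∫ x, x ^ n₂ * (P n₁ n₂).eval x ∂μ₂)
    (τd : Measure ℝ) [IsFiniteMeasure τd]
    (hcd : τd (Set.Icc aτ bτ)ᶜ = 0)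
    (hdual : ∀ z : ℝ, z ∉ Set.Icc aτ bτ →
      (∫ t, (z - t)⁻¹ ∂τ)⁻¹
        = z / (τ Set.univ).toReal - (∫ x, x ∂τ) / ((τ Set.univ).toReal) ^ 2
          - ∫ t, (z - t)⁻¹ ∂τd) :
    (∀ n₁ n₂ k : ℕ, k ≤ n₁ → k + 1 ≤ n₂ →
        ∫ x, x ^ k * (∫ y, (P n₁ n₂).eval y / (x - y) ∂μ₁) ∂τ = 0) ∧
    (∀ n₁ n₂ k : ℕ, k + 1 ≤ n₁ → k + 2 ≤ n₂ →
        ∫ x, x ^ k * (∫ y, (P n₁ n₂).eval y / (x - y) ∂μ₂) ∂τd = 0) ∧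
    (∀ n₁ n₂ : ℕ, n₂ ≤ n₁ →
        ∫ x, x ^ n₂ * (∫ y, (P n₁ n₂).eval y / (x - y) ∂μ₁) ∂τ = -h2 n₁ n₂) ∧
    (∀ n₁ n₂ : ℕ, n₁ + 2 ≤ n₂ →
        ∫ x, x ^ n₁ * (∫ y, (P n₁ n₂).eval y / (x - y) ∂μ₂) ∂τd = h1 n₁ n₂) ∧
    (∀ n₁ n₂ : ℕ, n₂ = n₁ + 1 →
        (τ Set.univ).toReal * h1 n₁ n₂ - h2 n₁ n₂
            = (∫ x, x ^ n₂ * (∫ y, (P n₁ n₂).eval y / (x - y) ∂μ₁) ∂τ) ∧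
        (∫ x, x ^ n₂ * (∫ y, (P n₁ n₂).eval y / (x - y) ∂μ₁) ∂τ)
            = (τ Set.univ).toReal
                * ∫ x, x ^ n₁ * (∫ y, (P n₁ n₂).eval y / (x - y) ∂μ₂) ∂τd) :=
  stmt10_general μ₁ τ aτ bτ a₁ b₁ hcτ hc₁ haτ hsep μ₂ hμ₂ P horth₁ horth₂ h1 h2 hh1 hh2 τd hcd hdual
end
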